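/- arXiv:2509.25565 — 8 statements merged into one kernel-verified Lean document; each statement's English description precedes it below -/
import Mathlib

section
/- The continuous framing-only optimization problem is equivalent to a Bayesian Stackelberg game: let P(s) = Σ_ω μ₀(ω)π(s|ω) and assume P(s) > 0 for every s ∈ 𝒮; define leader utility ũ(a,s) = Σ_ω (μ₀(ω)π(s|ω)/P(s))·u(a,ω) and type-s follower utility ṽ^s(a,ω) = π(s|ω)v(a,ω). Then for every x ∈ Δ(Ω) and every s ∈ 𝒮, the set argmax_{a∈𝒜} Σ_ω x(ω)π(s|ω)v(a,ω) coincides with the follower's best-response set argmax_{a∈𝒜} Σ_ω x(ω)ṽ^s(a,ω), and for any selection a*(s) from these sets, Σ_ω Σ_s μ₀(ω)π(s|ω)u(a*(s),ω) = Σ_s P(s)·ũ(a*(s),s). Consequently the optimal value of the framing-only problem max_{μ_c ∈ Δ(Ω)} Σ_ω Σ_s μ₀(ω)π(s|ω)u(a*_{μ_c,s},ω) equals the leader's optimal value in this Bayesian Stackelberg game with types 𝒮 drawn with probabilities P(s). -/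
open Finset

theorem mul_sum_div_mul_eq {ι K : Type*} [Field K] (s : Finset ι) {c : K} (hc : c ≠ 0)
    (w f : ι → K) : c * ∑ i ∈ s, w i / c * f i = ∑ i ∈ s, w i * f i := by
  rw [mul_sum]
  exact sum_congr rfl fun i _ => by rw [← mul_assoc, mul_div_cancel₀ _ hc]

theorem framing_only_equiv_bayesian_stackelberg_general
    {Ω 𝒜 𝒮 : Type*} [Fintype Ω] [Fintype 𝒜] [Fintype 𝒮]
    (u v : 𝒜 → Ω → ℝ)
    -- sender prior
    (μ₀ : Ω → ℝ)
    -- fixed signaling scheme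
    (π : Ω → 𝒮 → ℝ)
    -- type distribution P(s) = Σ_ω μ₀(ω) π(s|ω), assumed positive
    (P : 𝒮 → ℝ) (hPpos : ∀ s, 0 < P s)
    -- leader utility ũ(a,s) = Σ_ω (μ₀(ω)π(s|ω)/P(s))·u(a,ω)
    (util : 𝒜 → 𝒮 → ℝ) (hutil : ∀ a s, util a s = ∑ ω, (μ₀ ω * π ω s / P s) * u a ω)
    -- type-s follower utility ṽ^s(a,ω) = π(s|ω)·v(a,ω)
    (vtil : 𝒮 → 𝒜 → Ω → ℝ) (hvtil : ∀ s a ω, vtil s a ω = π ω s * v a ω) :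
    -- (1) the best-response sets coincide for every leader mixed strategy x and type s
    (∀ (x : Ω → ℝ) (s : 𝒮),
      {a : 𝒜 | ∀ a', ∑ ω, x ω * π ω s * v a' ω ≤ ∑ ω, x ω * π ω s * v a ω} =
      {a : 𝒜 | ∀ a', ∑ ω, x ω * vtil s a' ω ≤ ∑ ω, x ω * vtil s a ω}) ∧
    -- (2) the objectives agree for any selection a* : 𝒮 → 𝒜
    (∀ astar : 𝒮 → 𝒜,
      ∑ ω, ∑ s, μ₀ ω * π ω s * u (astar s) ω = ∑ s, P s * util (astar s) s) ∧
    -- (3) the optimal value of the framing-only problem equals the leader's optimal value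
    sSup {r : ℝ | ∃ x : Ω → ℝ, (∀ ω, 0 ≤ x ω) ∧ (∑ ω, x ω = 1) ∧
        ∃ astar : 𝒮 → 𝒜,
          (∀ s a, ∑ ω, x ω * π ω s * v a ω ≤ ∑ ω, x ω * π ω s * v (astar s) ω) ∧
          (∀ s a, ∑ ω, x ω * π ω s * v a ω = ∑ ω, x ω * π ω s * v (astar s) ω →
            ∑ ω, μ₀ ω * π ω s * u a ω ≤ ∑ ω, μ₀ ω * π ω s * u (astar s) ω) ∧
          r = ∑ ω, ∑ s, μ₀ ω * π ω s * u (astar s) ω} =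
    sSup {r : ℝ | ∃ x : Ω → ℝ, (∀ ω, 0 ≤ x ω) ∧ (∑ ω, x ω = 1) ∧
        ∃ astar : 𝒮 → 𝒜,
          (∀ s a, ∑ ω, x ω * vtil s a ω ≤ ∑ ω, x ω * vtil s (astar s) ω) ∧
          (∀ s a, ∑ ω, x ω * vtil s a ω = ∑ ω, x ω * vtil s (astar s) ω →
            util a s ≤ util (astar s) s) ∧
          r = ∑ s, P s * util (astar s) s} := by
  have follower_payoff (x : Ω → ℝ) (s : 𝒮) (a : 𝒜) :
      ∑ ω, x ω * vtil s a ω = ∑ ω, x ω * π ω s * v a ω :=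
    sum_congr rfl fun ω _ => by rw [hvtil, mul_assoc]
  have leader_payoff (a : 𝒜) (s : 𝒮) : P s * util a s = ∑ ω, μ₀ ω * π ω s * u a ω := by
    rw [hutil, mul_sum_div_mul_eq _ (hPpos s).ne']
  have objective (astar : 𝒮 → 𝒜) :
      ∑ ω, ∑ s, μ₀ ω * π ω s * u (astar s) ω = ∑ s, P s * util (astar s) s := by
    rw [sum_comm]
    simp only [leader_payoff]
  refine ⟨fun x s => by simp only [follower_payoff], objective, ?_⟩
  -- Scaling by `P s > 0` preserves the leader's tie-breaking, so the two sets become identical.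
  simp only [follower_payoff, ← leader_payoff, objective, mul_le_mul_iff_right₀ (hPpos _)]

/-- The continuous framing-only optimization problem is equivalent to a
Bayesian Stackelberg game: the best-response sets coincide, the objectives coincide on any
selection, and hence the optimal values of the two problems are equal. -/
theorem framing_only_equiv_bayesian_stackelberg
    {Ω 𝒜 𝒮 : Type*} [Fintype Ω] [Fintype 𝒜] [Fintype 𝒮]
    [Nonempty Ω] [Nonempty 𝒜] [Nonempty 𝒮]
    (u v : 𝒜 → Ω → ℝ)
    (hu : ∀ a ω, u a ω ∈ Set.Icc (0:ℝ) 1)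
    (hv : ∀ a ω, v a ω ∈ Set.Icc (0:ℝ) 1)
    -- sender prior
    (μ₀ : Ω → ℝ) (hμ₀pos : ∀ ω, 0 < μ₀ ω) (hμ₀sum : ∑ ω, μ₀ ω = 1)
    -- fixed signaling scheme
    (π : Ω → 𝒮 → ℝ) (hπ : ∀ ω s, 0 ≤ π ω s) (hπsum : ∀ ω, ∑ s, π ω s = 1)
    -- type distribution P(s) = Σ_ω μ₀(ω) π(s|ω), assumed positive
    (P : 𝒮 → ℝ) (hP : ∀ s, P s = ∑ ω, μ₀ ω * π ω s) (hPpos : ∀ s, 0 < P s)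
    -- leader utility ũ(a,s) = Σ_ω (μ₀(ω)π(s|ω)/P(s))·u(a,ω)
    (util : 𝒜 → 𝒮 → ℝ) (hutil : ∀ a s, util a s = ∑ ω, (μ₀ ω * π ω s / P s) * u a ω)
    -- type-s follower utility ṽ^s(a,ω) = π(s|ω)·v(a,ω)
    (vtil : 𝒮 → 𝒜 → Ω → ℝ) (hvtil : ∀ s a ω, vtil s a ω = π ω s * v a ω) :
    -- (1) the best-response sets coincide for every leader mixed strategy x and type s
    (∀ (x : Ω → ℝ) (s : 𝒮),
      {a : 𝒜 | ∀ a', ∑ ω, x ω * π ω s * v a' ω ≤ ∑ ω, x ω * π ω s * v a ω} =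
      {a : 𝒜 | ∀ a', ∑ ω, x ω * vtil s a' ω ≤ ∑ ω, x ω * vtil s a ω}) ∧
    -- (2) the objectives agree for any selection a* : 𝒮 → 𝒜
    (∀ astar : 𝒮 → 𝒜,
      ∑ ω, ∑ s, μ₀ ω * π ω s * u (astar s) ω = ∑ s, P s * util (astar s) s) ∧
    -- (3) the optimal value of the framing-only problem equals the leader's optimal value
    sSup {r : ℝ | ∃ x : Ω → ℝ, (∀ ω, 0 ≤ x ω) ∧ (∑ ω, x ω = 1) ∧
        ∃ astar : 𝒮 → 𝒜,
          (∀ s a, ∑ ω, x ω * π ω s * v a ω ≤ ∑ ω, x ω * π ω s * v (astar s) ω) ∧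
          (∀ s a, ∑ ω, x ω * π ω s * v a ω = ∑ ω, x ω * π ω s * v (astar s) ω →
            ∑ ω, μ₀ ω * π ω s * u a ω ≤ ∑ ω, μ₀ ω * π ω s * u (astar s) ω) ∧
          r = ∑ ω, ∑ s, μ₀ ω * π ω s * u (astar s) ω} =
    sSup {r : ℝ | ∃ x : Ω → ℝ, (∀ ω, 0 ≤ x ω) ∧ (∑ ω, x ω = 1) ∧
        ∃ astar : 𝒮 → 𝒜,
          (∀ s a, ∑ ω, x ω * vtil s a ω ≤ ∑ ω, x ω * vtil s (astar s) ω) ∧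
          (∀ s a, ∑ ω, x ω * vtil s a ω = ∑ ω, x ω * vtil s (astar s) ω →
            util a s ≤ util (astar s) s) ∧
          r = ∑ s, P s * util (astar s) s} :=
  framing_only_equiv_bayesian_stackelberg_general u v μ₀ π P hPpos util hutil vtil hvtil
end

section
/- Local Lipschitz continuity of the optimal sender utility in the receiver's prior: suppose v has inducibility margin D > 0, and let μ ∈ Δ(Ω) satisfy μ(ω) ≥ 2p₀ > 0 for every ω ∈ Ω. Then for every μ' ∈ Δ(Ω) with ‖μ' − μ‖₁ ≤ ε, where 0 < ε < min{p₀, p₀²D/2}, one has |U*(μ') − U*(μ)| ≤ 4ε/(p₀²D). In particular U* is locally Lipschitz continuous on the interior of the simplex Δ(Ω). -/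
/-! A scheme obedient for `ν` is turned into one obedient for `ν'` by replacing, at each state
`ω`, the recommendation with the receiver's best response there with probability `1 - ρ ω`,
where `ρ = (1 - ε/p₀) ν/ν'` is chosen so that `ν' ρ` is a constant multiple of `ν`.
The sender loses at most `max (1 - ρ) ≤ 2ε/p₀`, so `|U*(μ') - U*(μ)| ≤ 2ε/p₀`; this is at most
`4ε/(p₀²D)` because `2p₀ ≤ 1` and, as soon as there are two actions, `D ≤ 1`. -/

open Finset

noncomputable def Ustar {Ω 𝒜 : Type*} [Fintype Ω] [Fintype 𝒜]
    (u v : 𝒜 → Ω → ℝ) (μ₀ : Ω → ℝ) (μ : Ω → ℝ) : ℝ :=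
  sSup {r : ℝ | ∃ π : Ω → 𝒜 → ℝ,
    (∀ ω a, 0 ≤ π ω a) ∧ (∀ ω, ∑ a, π ω a = 1) ∧
    (∀ a a', 0 ≤ ∑ ω, μ ω * π ω a * (v a ω - v a' ω)) ∧
    r = ∑ ω, ∑ a, μ₀ ω * π ω a * u a ω}

theorem le_one_of_forall_le_of_sum_eq_one {Ω : Type*} [Fintype Ω] {μ : Ω → ℝ} {c : ℝ}
    (hμ : ∀ ω, 0 ≤ μ ω) (hsum : ∑ ω, μ ω = 1) (hc : ∀ ω, c ≤ μ ω) : c ≤ 1 := by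
  obtain ⟨ω, -, -⟩ := exists_ne_zero_of_sum_ne_zero (hsum ▸ one_ne_zero : ∑ ω, μ ω ≠ 0)
  calc c ≤ μ ω := hc ω
    _ ≤ ∑ ω, μ ω := single_le_sum (fun ω _ => hμ ω) (mem_univ ω)
    _ = 1 := hsum

theorem rescaled_ratio_bounds {p₀ ε x x' : ℝ} (hp₀ : 0 < p₀) (hε : 0 ≤ ε) (hεp : ε ≤ p₀)
    (hx : p₀ ≤ x) (hx' : p₀ ≤ x') (hxx' : |x - x'| ≤ ε) :
    0 ≤ (1 - ε / p₀) * x / x' ∧ (1 - ε / p₀) * x / x' ≤ 1 ∧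
      1 - (1 - ε / p₀) * x / x' ≤ 2 * ε / p₀ := by
  obtain ⟨hlo, hhi⟩ := abs_le.1 hxx'
  have hx'pos : 0 < x' := hp₀.trans_le hx'
  set s := ε / p₀ with hs
  have hs0 : 0 ≤ s := div_nonneg hε hp₀.le
  have hs1 : s ≤ 1 := (div_le_one hp₀).2 hεp
  have hε_le : ∀ y, p₀ ≤ y → ε ≤ s * y := fun y hy => by
    rw [hs, div_mul_eq_mul_div, le_div_iff₀ hp₀]; exact mul_le_mul_of_nonneg_left hy hε
  refine ⟨by have := hp₀.trans_le hx; positivity, ?_, ?_⟩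
  · rw [div_le_one hx'pos]
    nlinarith [hε_le x hx]
  · have hsq : (1 - s) ^ 2 ≤ (1 - s) * x / x' := by
      rw [le_div_iff₀ hx'pos, sq, mul_assoc]
      exact mul_le_mul_of_nonneg_left (by nlinarith [hε_le x' hx']) (by linarith)
    have h2s : 2 * ε / p₀ = 2 * s := mul_div_assoc _ _ _
    nlinarith

theorem sum_mul_mem_Icc_of_sum_eq_one {ι : Type*} [Fintype ι] {p f : ι → ℝ}
    (hp : ∀ i, 0 ≤ p i) (hsum : ∑ i, p i = 1) (hf : ∀ i, f i ∈ Set.Icc (0 : ℝ) 1) :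
    ∑ i, p i * f i ∈ Set.Icc (0 : ℝ) 1 := by
  refine ⟨sum_nonneg fun i _ => mul_nonneg (hp i) (hf i).1, ?_⟩
  calc ∑ i, p i * f i ≤ ∑ i, p i := sum_le_sum fun i _ => mul_le_of_le_one_right (hp i) (hf i).2
    _ = 1 := hsum

namespace Persuasion

variable {Ω 𝒜 : Type*}

def pureScheme [DecidableEq 𝒜] (b : Ω → 𝒜) : Ω → 𝒜 → ℝ :=
  fun ω a => if a = b ω then 1 else 0

def mixScheme (ρ : Ω → ℝ) (π σ : Ω → 𝒜 → ℝ) : Ω → 𝒜 → ℝ :=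
  fun ω a => ρ ω * π ω a + (1 - ρ ω) * σ ω a

section Scheme

variable [Fintype 𝒜]

def IsScheme (π : Ω → 𝒜 → ℝ) : Prop :=
  (∀ ω a, 0 ≤ π ω a) ∧ ∀ ω, ∑ a, π ω a = 1

theorem isScheme_pureScheme [DecidableEq 𝒜] (b : Ω → 𝒜) : IsScheme (pureScheme b) :=
  ⟨fun ω a => by unfold pureScheme; split_ifs <;> norm_num, fun ω => by simp [pureScheme]⟩

theorem IsScheme.mix {ρ : Ω → ℝ} {π σ : Ω → 𝒜 → ℝ} (hπ : IsScheme π) (hσ : IsScheme σ)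
    (hρ0 : ∀ ω, 0 ≤ ρ ω) (hρ1 : ∀ ω, ρ ω ≤ 1) : IsScheme (mixScheme ρ π σ) := by
  refine ⟨fun ω a => ?_, fun ω => ?_⟩
  · exact add_nonneg (mul_nonneg (hρ0 ω) (hπ.1 ω a))
      (mul_nonneg (sub_nonneg.2 (hρ1 ω)) (hσ.1 ω a))
  · simp only [mixScheme, sum_add_distrib, ← mul_sum, hπ.2, hσ.2]
    ring

theorem IsScheme.sum_mul_mem_Icc {u : 𝒜 → Ω → ℝ} {π : Ω → 𝒜 → ℝ} (hπ : IsScheme π)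
    (hu : ∀ a ω, u a ω ∈ Set.Icc (0 : ℝ) 1) (ω : Ω) :
    ∑ a, π ω a * u a ω ∈ Set.Icc (0 : ℝ) 1 :=
  sum_mul_mem_Icc_of_sum_eq_one (hπ.1 ω) (hπ.2 ω) fun a => hu a ω

end Scheme

section Obedience

variable [Fintype Ω]

def IsObedient (v : 𝒜 → Ω → ℝ) (μ : Ω → ℝ) (π : Ω → 𝒜 → ℝ) : Prop :=
  ∀ a a', 0 ≤ ∑ ω, μ ω * π ω a * (v a ω - v a' ω)

theorem isObedient_pureScheme [DecidableEq 𝒜] {v : 𝒜 → Ω → ℝ} {μ : Ω → ℝ} {b : Ω → 𝒜}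
    (hb : ∀ ω a, v a ω ≤ v (b ω) ω) (hμ : ∀ ω, 0 ≤ μ ω) : IsObedient v μ (pureScheme b) := by
  intro a a'
  refine sum_nonneg fun ω _ => ?_
  unfold pureScheme
  split_ifs with h
  · subst h
    simpa using mul_nonneg (hμ ω) (sub_nonneg.2 (hb ω a'))
  · simp

theorem IsObedient.mix {v : 𝒜 → Ω → ℝ} {ν ν' ρ : Ω → ℝ} {π σ : Ω → 𝒜 → ℝ} {t : ℝ}
    (ht : 0 ≤ t) (hρ : ∀ ω, ν' ω * ρ ω = t * ν ω) (hπ : IsObedient v ν π)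
    (hσ : IsObedient v (fun ω => ν' ω * (1 - ρ ω)) σ) :
    IsObedient v ν' (mixScheme ρ π σ) := by
  intro a a'
  have hsplit : ∑ ω, ν' ω * mixScheme ρ π σ ω a * (v a ω - v a' ω) =
      t * ∑ ω, ν ω * π ω a * (v a ω - v a' ω) +
        ∑ ω, ν' ω * (1 - ρ ω) * σ ω a * (v a ω - v a' ω) := by
    rw [mul_sum, ← sum_add_distrib]
    refine sum_congr rfl fun ω _ => ?_
    simp only [mixScheme]
    linear_combination (π ω a * (v a ω - v a' ω)) * hρ ω
  rw [hsplit]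
  exact add_nonneg (mul_nonneg ht (hπ a a')) (hσ a a')

end Obedience

variable [Fintype Ω] [Fintype 𝒜]

def senderValue (u : 𝒜 → Ω → ℝ) (μ₀ : Ω → ℝ) (π : Ω → 𝒜 → ℝ) : ℝ :=
  ∑ ω, ∑ a, μ₀ ω * π ω a * u a ω

variable {u : 𝒜 → Ω → ℝ} {μ₀ : Ω → ℝ}

theorem senderValue_eq {π : Ω → 𝒜 → ℝ} :
    senderValue u μ₀ π = ∑ ω, μ₀ ω * ∑ a, π ω a * u a ω := by
  simp only [senderValue, mul_sum, mul_assoc]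

theorem senderValue_le_sum {π : Ω → 𝒜 → ℝ} (hπ : IsScheme π)
    (hu : ∀ a ω, u a ω ∈ Set.Icc (0 : ℝ) 1) (hμ₀ : ∀ ω, 0 ≤ μ₀ ω) :
    senderValue u μ₀ π ≤ ∑ ω, μ₀ ω := by
  rw [senderValue_eq]
  exact sum_le_sum fun ω _ => mul_le_of_le_one_right (hμ₀ ω) (hπ.sum_mul_mem_Icc hu ω).2

theorem senderValue_sub_mixScheme_le {ρ : Ω → ℝ} {π σ : Ω → 𝒜 → ℝ} (hπ : IsScheme π)
    (hσ : IsScheme σ) (hu : ∀ a ω, u a ω ∈ Set.Icc (0 : ℝ) 1) (hμ₀ : ∀ ω, 0 ≤ μ₀ ω)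
    (hρ1 : ∀ ω, ρ ω ≤ 1) :
    senderValue u μ₀ π - senderValue u μ₀ (mixScheme ρ π σ) ≤ ∑ ω, μ₀ ω * (1 - ρ ω) := by
  have hdiff : senderValue u μ₀ π - senderValue u μ₀ (mixScheme ρ π σ) =
      ∑ ω, μ₀ ω * (1 - ρ ω) * (∑ a, π ω a * u a ω - ∑ a, σ ω a * u a ω) := by
    rw [senderValue_eq, senderValue_eq, ← sum_sub_distrib]
    refine sum_congr rfl fun ω _ => ?_
    simp only [mixScheme, add_mul, sum_add_distrib, mul_assoc, ← mul_sum]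
    ring
  rw [hdiff]
  refine sum_le_sum fun ω _ => mul_le_of_le_one_right
    (mul_nonneg (hμ₀ ω) (sub_nonneg.2 (hρ1 ω))) ?_
  linarith [(hπ.sum_mul_mem_Icc hu ω).2, (hσ.sum_mul_mem_Icc hu ω).1]

variable {v : 𝒜 → Ω → ℝ}

theorem senderValue_le_Ustar {ν : Ω → ℝ} {π : Ω → 𝒜 → ℝ} (hπ : IsScheme π)
    (hob : IsObedient v ν π) (hu : ∀ a ω, u a ω ∈ Set.Icc (0 : ℝ) 1) (hμ₀ : ∀ ω, 0 ≤ μ₀ ω) :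
    senderValue u μ₀ π ≤ Ustar u v μ₀ ν := by
  refine le_csSup ⟨∑ ω, μ₀ ω, ?_⟩ ⟨π, hπ.1, hπ.2, hob, rfl⟩
  rintro r ⟨π', hπ'0, hπ'1, -, rfl⟩
  exact senderValue_le_sum ⟨hπ'0, hπ'1⟩ hu hμ₀

theorem Ustar_le_of_forall {ν : Ω → ℝ} {c : ℝ} (hne : ∃ π, IsScheme π ∧ IsObedient v ν π)
    (h : ∀ π, IsScheme π → IsObedient v ν π → senderValue u μ₀ π ≤ c) :
    Ustar u v μ₀ ν ≤ c := by
  obtain ⟨π, hπ, hob⟩ := hne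
  refine csSup_le ⟨_, π, hπ.1, hπ.2, hob, rfl⟩ ?_
  rintro r ⟨π', hπ'0, hπ'1, hob', rfl⟩
  exact h π' ⟨hπ'0, hπ'1⟩ hob'

theorem Ustar_le_Ustar_add [Nonempty 𝒜] (hu : ∀ a ω, u a ω ∈ Set.Icc (0 : ℝ) 1)
    (hμ₀ : ∀ ω, 0 ≤ μ₀ ω) (hμ₀sum : ∑ ω, μ₀ ω = 1) {p₀ ε : ℝ} (hp₀ : 0 < p₀) (hε : 0 ≤ ε)
    (hεp : ε ≤ p₀) {ν ν' : Ω → ℝ} (hν : ∀ ω, p₀ ≤ ν ω) (hν' : ∀ ω, p₀ ≤ ν' ω)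
    (hclose : ∀ ω, |ν ω - ν' ω| ≤ ε) :
    Ustar u v μ₀ ν ≤ Ustar u v μ₀ ν' + 2 * ε / p₀ := by
  classical
  choose b hb using fun ω => Finite.exists_max (v · ω)
  set t := 1 - ε / p₀
  set ρ : Ω → ℝ := fun ω => t * ν ω / ν' ω
  have hρ := fun ω => rescaled_ratio_bounds hp₀ hε hεp (hν ω) (hν' ω) (hclose ω)
  have hν'ρ : ∀ ω, ν' ω * ρ ω = t * ν ω := fun ω =>
    mul_div_cancel₀ _ (hp₀.trans_le (hν' ω)).ne'
  refine Ustar_le_of_forall ⟨pureScheme b, isScheme_pureScheme b,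
    isObedient_pureScheme hb fun ω => hp₀.le.trans (hν ω)⟩ fun π hπ hob => ?_
  have hπ' := hπ.mix (isScheme_pureScheme b) (fun ω => (hρ ω).1) fun ω => (hρ ω).2.1
  have hob' : IsObedient v ν' (mixScheme ρ π (pureScheme b)) :=
    hob.mix (sub_nonneg.2 ((div_le_one hp₀).2 hεp)) hν'ρ <| isObedient_pureScheme hb
      fun ω => mul_nonneg (hp₀.le.trans (hν' ω)) (sub_nonneg.2 (hρ ω).2.1)
  have hloss : ∑ ω, μ₀ ω * (1 - ρ ω) ≤ 2 * ε / p₀ :=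
    calc ∑ ω, μ₀ ω * (1 - ρ ω) ≤ ∑ ω, μ₀ ω * (2 * ε / p₀) :=
          sum_le_sum fun ω _ => mul_le_mul_of_nonneg_left (hρ ω).2.2 (hμ₀ ω)
      _ = 2 * ε / p₀ := by rw [← sum_mul, hμ₀sum, one_mul]
  linarith [senderValue_sub_mixScheme_le hπ (isScheme_pureScheme b) hu hμ₀ fun ω => (hρ ω).2.1,
    senderValue_le_Ustar hπ' hob' hu hμ₀]

theorem Ustar_eq_of_subsingleton [Subsingleton 𝒜] (u v : 𝒜 → Ω → ℝ) (μ₀ ν ν' : Ω → ℝ) :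
    Ustar u v μ₀ ν = Ustar u v μ₀ ν' := by
  have hob : ∀ (ν : Ω → ℝ) (π : Ω → 𝒜 → ℝ) (a a' : 𝒜),
      0 ≤ ∑ ω, ν ω * π ω a * (v a ω - v a' ω) := fun ν π a a' => by
    simp [Subsingleton.elim a' a]
  simp only [Ustar, hob]

end Persuasion

theorem margin_le_one {Ω 𝒜 : Type*} [Fintype Ω] {v : 𝒜 → Ω → ℝ}
    (hv : ∀ a ω, v a ω ∈ Set.Icc (0 : ℝ) 1) {D : ℝ}
    (hmargin : ∀ a : 𝒜, ∃ η : Ω → ℝ, (∀ ω, 0 ≤ η ω) ∧ (∑ ω, η ω = 1) ∧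
      ∀ a', a' ≠ a → D ≤ ∑ ω, η ω * (v a ω - v a' ω))
    {a a' : 𝒜} (hne : a' ≠ a) : D ≤ 1 := by
  obtain ⟨η, hη0, hηsum, hη⟩ := hmargin a
  calc D ≤ ∑ ω, η ω * (v a ω - v a' ω) := hη a' hne
    _ ≤ ∑ ω, η ω := sum_le_sum fun ω _ =>
        mul_le_of_le_one_right (hη0 ω) (by linarith [(hv a ω).2, (hv a' ω).1])
    _ = 1 := hηsum

theorem Ustar_locally_lipschitz_general
    {Ω 𝒜 : Type*} [Fintype Ω] [Fintype 𝒜]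
    (u v : 𝒜 → Ω → ℝ)
    (hu : ∀ a ω, u a ω ∈ Set.Icc (0:ℝ) 1)
    (hv : ∀ a ω, v a ω ∈ Set.Icc (0:ℝ) 1)
    (μ₀ : Ω → ℝ) (hμ₀pos : ∀ ω, 0 < μ₀ ω) (hμ₀sum : ∑ ω, μ₀ ω = 1)
    -- inducibility margin D
    (D : ℝ) (hD : 0 < D)
    (hmargin : ∀ a : 𝒜, ∃ η : Ω → ℝ, (∀ ω, 0 ≤ η ω) ∧ (∑ ω, η ω = 1) ∧
      ∀ a', a' ≠ a → D ≤ ∑ ω, η ω * (v a ω - v a' ω))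
    -- the prior μ, bounded below by 2p₀
    (p₀ : ℝ) (hp₀ : 0 < p₀)
    (μ : Ω → ℝ) (hμ : ∀ ω, 0 ≤ μ ω) (hμsum : ∑ ω, μ ω = 1)
    (hμlb : ∀ ω, 2 * p₀ ≤ μ ω)
    -- the nearby prior μ'
    (μ' : Ω → ℝ)
    (ε : ℝ) (hε0 : 0 < ε) (hεlt : ε < min p₀ (p₀ ^ 2 * D / 2))
    (hdist : ∑ ω, |μ' ω - μ ω| ≤ ε) :
    |Ustar u v μ₀ μ' - Ustar u v μ₀ μ| ≤ 4 * ε / (p₀ ^ 2 * D) := by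
  rcases subsingleton_or_nontrivial 𝒜 with h𝒜 | h𝒜
  · rw [Persuasion.Ustar_eq_of_subsingleton u v μ₀ μ' μ, sub_self, abs_zero]
    positivity
  obtain ⟨a, a', hne⟩ := exists_pair_ne 𝒜
  have hD1 : D ≤ 1 := margin_le_one hv hmargin hne
  have hp₀half : 2 * p₀ ≤ 1 := le_one_of_forall_le_of_sum_eq_one hμ hμsum hμlb
  have hεp : ε ≤ p₀ := hεlt.le.trans (min_le_left _ _)
  have hclose : ∀ ω, |μ' ω - μ ω| ≤ ε := fun ω =>
    (single_le_sum (f := fun ω => |μ' ω - μ ω|) (fun _ _ => abs_nonneg _) (mem_univ ω)).trans hdist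
  have hμp : ∀ ω, p₀ ≤ μ ω := fun ω => by linarith [hμlb ω]
  have hμ'p : ∀ ω, p₀ ≤ μ' ω := fun ω => by linarith [hμlb ω, (abs_le.1 (hclose ω)).1]
  have hμ₀ : ∀ ω, 0 ≤ μ₀ ω := fun ω => (hμ₀pos ω).le
  have h₁ := Persuasion.Ustar_le_Ustar_add (v := v) hu hμ₀ hμ₀sum hp₀ hε0.le hεp hμ'p hμp hclose
  have h₂ := Persuasion.Ustar_le_Ustar_add (v := v) hu hμ₀ hμ₀sum hp₀ hε0.le hεp hμp hμ'p
    fun ω => abs_sub_comm (μ' ω) (μ ω) ▸ hclose ω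
  calc |Ustar u v μ₀ μ' - Ustar u v μ₀ μ| ≤ 2 * ε / p₀ :=
        abs_sub_le_iff.2 ⟨by linarith, by linarith⟩
    _ ≤ 4 * ε / (p₀ ^ 2 * D) := by
      rw [div_le_div_iff₀ hp₀ (by positivity)]
      nlinarith [mul_le_mul hp₀half hD1 hD.le zero_le_one, mul_pos hε0 hp₀]

/-- Local Lipschitz continuity of the optimal sender utility in the
receiver's prior: if `v` has inducibility margin `D > 0` and `μ(ω) ≥ 2p₀ > 0` for all `ω`,
then for any prior `μ'` with `‖μ' − μ‖₁ ≤ ε < min{p₀, p₀²D/2}`, one has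
`|U*(μ') − U*(μ)| ≤ 4ε/(p₀²D)`. -/
theorem Ustar_locally_lipschitz
    {Ω 𝒜 : Type*} [Fintype Ω] [Fintype 𝒜] [Nonempty Ω] [Nonempty 𝒜]
    (u v : 𝒜 → Ω → ℝ)
    (hu : ∀ a ω, u a ω ∈ Set.Icc (0:ℝ) 1)
    (hv : ∀ a ω, v a ω ∈ Set.Icc (0:ℝ) 1)
    (μ₀ : Ω → ℝ) (hμ₀pos : ∀ ω, 0 < μ₀ ω) (hμ₀sum : ∑ ω, μ₀ ω = 1)
    -- inducibility margin D
    (D : ℝ) (hD : 0 < D)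
    (hmargin : ∀ a : 𝒜, ∃ η : Ω → ℝ, (∀ ω, 0 ≤ η ω) ∧ (∑ ω, η ω = 1) ∧
      ∀ a', a' ≠ a → D ≤ ∑ ω, η ω * (v a ω - v a' ω))
    -- the prior μ, bounded below by 2p₀
    (p₀ : ℝ) (hp₀ : 0 < p₀)
    (μ : Ω → ℝ) (hμ : ∀ ω, 0 ≤ μ ω) (hμsum : ∑ ω, μ ω = 1)
    (hμlb : ∀ ω, 2 * p₀ ≤ μ ω)
    -- the nearby prior μ'
    (μ' : Ω → ℝ) (hμ' : ∀ ω, 0 ≤ μ' ω) (hμ'sum : ∑ ω, μ' ω = 1)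
    (ε : ℝ) (hε0 : 0 < ε) (hεlt : ε < min p₀ (p₀ ^ 2 * D / 2))
    (hdist : ∑ ω, |μ' ω - μ ω| ≤ ε) :
    |Ustar u v μ₀ μ' - Ustar u v μ₀ μ| ≤ 4 * ε / (p₀ ^ 2 * D) :=
  Ustar_locally_lipschitz_general u v hu hv μ₀ hμ₀pos hμ₀sum D hD hmargin p₀ hp₀ μ hμ hμsum hμlb μ'
    ε hε0 hεlt hdist
end

section
/- Continuity of posteriors in the prior: let π : Ω → Δ(𝒮) be a signaling scheme, let μ, μ' ∈ Δ(Ω) with μ(ω) ≥ p₀ > 0 for every ω ∈ Ω, and let s ∈ 𝒮 be a signal with Σ_ω μ(ω)π(s|ω) > 0 and Σ_ω μ'(ω)π(s|ω) > 0. Let μ_s and μ'_s be the posterior beliefs induced by signal s under priors μ and μ' respectively. Then ‖μ_s − μ'_s‖₁ ≤ (2/p₀)·‖μ − μ'‖₁. -/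
/-!
Normalising a vector is Lipschitz: if `a` and `b ≥ 0` have positive totals `A, B`, then
`a/A - b/B = (a - b)/A + b (1/A - 1/B)`, and the second term has ℓ¹ norm `|A - B|/A ≤ ‖a - b‖₁/A`,
so `‖a/A - b/B‖₁ ≤ 2‖a - b‖₁/A`. Applied to the unnormalised posteriors `μ(ω)π(s|ω)` and
`μ'(ω)π(s|ω)`, the difference has norm at most `‖μ - μ'‖₁ · T` with `T = Σ_ω π(s|ω)`, while the
lower bound on the prior gives `A ≥ p₀ T`.
-/

open Finset

theorem Finset.abs_sum_sub_sum_le {ι : Type*} (t : Finset ι) (a b : ι → ℝ) :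
    |∑ i ∈ t, a i - ∑ i ∈ t, b i| ≤ ∑ i ∈ t, |a i - b i| := by
  rw [← sum_sub_distrib]
  exact abs_sum_le_sum_abs _ _

theorem Finset.sum_mul_le_sum_mul_sum {ι : Type*} (t : Finset ι) (c w : ι → ℝ)
    (hc : ∀ i ∈ t, 0 ≤ c i) (hw : ∀ i ∈ t, 0 ≤ w i) :
    ∑ i ∈ t, c i * w i ≤ (∑ i ∈ t, c i) * ∑ i ∈ t, w i := by
  rw [sum_mul]
  exact sum_le_sum fun i hi => mul_le_mul_of_nonneg_left (single_le_sum hw hi) (hc i hi)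

theorem sum_abs_div_sum_sub_div_sum_le {ι : Type*} [Fintype ι] (a b : ι → ℝ)
    (hb : ∀ i, 0 ≤ b i) (hA : 0 < ∑ i, a i) (hB : 0 < ∑ i, b i) :
    ∑ i, |a i / ∑ j, a j - b i / ∑ j, b j| ≤ 2 / (∑ i, a i) * ∑ i, |a i - b i| := by
  set A := ∑ i, a i
  set B := ∑ i, b i
  have hscale : B * |1 / A - 1 / B| = |A - B| / A := by
    have h : B * (1 / A - 1 / B) = (B - A) / A := by field_simp
    rw [← abs_of_pos hB, ← abs_mul, abs_of_pos hB, h, abs_div, abs_of_pos hA, abs_sub_comm]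
  calc ∑ i, |a i / A - b i / B|
      = ∑ i, |(a i - b i) / A + b i * (1 / A - 1 / B)| := by
        congr! 2 with i
        ring
    _ ≤ ∑ i, (|a i - b i| / A + b i * |1 / A - 1 / B|) := by
        gcongr with i
        refine (abs_add_le _ _).trans_eq ?_
        rw [abs_div, abs_of_pos hA, abs_mul, abs_of_nonneg (hb i)]
    _ = (∑ i, |a i - b i|) / A + |A - B| / A := by
        rw [sum_add_distrib, ← sum_div, ← sum_mul, hscale]
    _ ≤ (∑ i, |a i - b i|) / A + (∑ i, |a i - b i|) / A := by
        gcongr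
        exact abs_sum_sub_sum_le _ _ _
    _ = 2 / A * ∑ i, |a i - b i| := by ring

theorem posterior_continuity_general
    {Ω 𝒮 : Type*} [Fintype Ω]
    (π : Ω → 𝒮 → ℝ) (hπ : ∀ ω s, 0 ≤ π ω s)
    (p₀ : ℝ) (hp₀ : 0 < p₀)
    (μ μ' : Ω → ℝ)
    (hμlb : ∀ ω, p₀ ≤ μ ω)
    (hμ' : ∀ ω, 0 ≤ μ' ω)
    (s : 𝒮)
    (hpos : 0 < ∑ ω, μ ω * π ω s) (hpos' : 0 < ∑ ω, μ' ω * π ω s) :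
    ∑ ω, |μ ω * π ω s / (∑ ω', μ ω' * π ω' s) -
          μ' ω * π ω s / (∑ ω', μ' ω' * π ω' s)| ≤
      (2 / p₀) * ∑ ω, |μ ω - μ' ω| := by
  set A := ∑ ω, μ ω * π ω s
  set T := ∑ ω, π ω s
  set S := ∑ ω, |μ ω - μ' ω|
  have hdiff : ∑ ω, |μ ω * π ω s - μ' ω * π ω s| ≤ S * T := by
    simp_rw [← sub_mul, abs_mul, abs_of_nonneg (hπ _ s)]
    exact sum_mul_le_sum_mul_sum _ _ _ (fun ω _ => abs_nonneg _) fun ω _ => hπ ω s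
  have hmass : p₀ * T ≤ A := by
    rw [mul_sum]
    exact sum_le_sum fun ω _ => mul_le_mul_of_nonneg_right (hμlb ω) (hπ ω s)
  have hS : 0 ≤ S := sum_nonneg fun ω _ => abs_nonneg _
  refine (sum_abs_div_sum_sub_div_sum_le _ _ (fun ω => mul_nonneg (hμ' ω) (hπ ω s))
    hpos hpos').trans ?_
  rw [div_mul_eq_mul_div, div_mul_eq_mul_div, div_le_div_iff₀ hpos hp₀]
  nlinarith [mul_le_mul_of_nonneg_left hmass hS]

/-- Continuity of posteriors in the prior: if `μ(ω) ≥ p₀ > 0` for every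
state, then for any prior `μ'` and any signal `s` with positive probability under both
priors, the posteriors satisfy `‖μ_s − μ'_s‖₁ ≤ (2/p₀)·‖μ − μ'‖₁`. -/
theorem posterior_continuity
    {Ω 𝒮 : Type*} [Fintype Ω] [Fintype 𝒮] [Nonempty Ω] [Nonempty 𝒮]
    (π : Ω → 𝒮 → ℝ) (hπ : ∀ ω s, 0 ≤ π ω s) (hπsum : ∀ ω, ∑ s, π ω s = 1)
    (p₀ : ℝ) (hp₀ : 0 < p₀)
    (μ μ' : Ω → ℝ)
    (hμ : ∀ ω, 0 ≤ μ ω) (hμsum : ∑ ω, μ ω = 1) (hμlb : ∀ ω, p₀ ≤ μ ω)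
    (hμ' : ∀ ω, 0 ≤ μ' ω) (hμ'sum : ∑ ω, μ' ω = 1)
    (s : 𝒮)
    (hpos : 0 < ∑ ω, μ ω * π ω s) (hpos' : 0 < ∑ ω, μ' ω * π ω s) :
    ∑ ω, |μ ω * π ω s / (∑ ω', μ ω' * π ω' s) -
          μ' ω * π ω s / (∑ ω', μ' ω' * π ω' s)| ≤
      (2 / p₀) * ∑ ω, |μ ω - μ' ω| :=
  posterior_continuity_general π hπ p₀ hp₀ μ μ' hμlb hμ' s hpos hpos'
end

section
/- Closeness of the modified signaling scheme: under the construction of π̃ from (μ, π*, {η_a}, δ, y, χ), with μ(ω) ≥ p₀ > 0 for every ω, for every action a ∈ 𝒜 with π*(a) > 0 and every state ω ∈ Ω one has |π̃(a|ω) − π*(a|ω)| ≤ δ/p₀ + y. -/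
open Finset

/-!
On the action signals, `π̃(a|ω) = (1 - y)((1 - δ) π*(a|ω) + δ π*(a) η_a(ω) / μ(ω))`: the
posterior part of `ξ_a` reproduces `π*(a|ω)` exactly. The weight `t = π*(a) η_a(ω) / μ(ω)` of
the belief part lies in `[0, 1/p₀]`, so mixing moves `π*(a|ω)` up by at most `δ/p₀` and down by
at most `δ + y ≤ δ/p₀ + y`.
-/

lemma sum_mul_le_one_of_mem_stdSimplex {ι : Type*} [Fintype ι] {w f : ι → ℝ}
    (hw : w ∈ stdSimplex ℝ ι) (hf : ∀ i, f i ≤ 1) : ∑ i, w i * f i ≤ 1 :=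
  calc ∑ i, w i * f i ≤ ∑ i, w i :=
        sum_le_sum fun i _ => mul_le_of_le_one_right (hw.1 i) (hf i)
    _ = 1 := hw.2

lemma abs_mix_sub_le {p δ y π t : ℝ} (hp : 0 < p) (hp1 : p ≤ 1) (hδ : δ ∈ Set.Icc (0:ℝ) 1)
    (hy : y ∈ Set.Icc (0:ℝ) 1) (hπ : π ∈ Set.Icc (0:ℝ) 1) (ht0 : 0 ≤ t) (ht : p * t ≤ 1) :
    |(1 - y) * ((1 - δ) * π + δ * t) - π| ≤ δ / p + y := by
  obtain ⟨hδ0, hδ1⟩ := hδ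
  obtain ⟨hy0, hy1⟩ := hy
  obtain ⟨hπ0, hπ1⟩ := hπ
  have hδ_le : δ ≤ δ / p := le_div_self hδ0 hp hp1
  have hδt : δ * t ≤ δ / p := by
    rw [le_div_iff₀ hp]
    nlinarith
  rw [abs_le]
  constructor
  · nlinarith [mul_nonneg (mul_nonneg (sub_nonneg.2 hy1) hδ0) ht0, mul_nonneg hy0 hδ0,
      mul_nonneg (mul_nonneg hy0 hδ0) hπ0]
  · nlinarith [mul_nonneg hy0 (add_nonneg (mul_nonneg (sub_nonneg.2 hδ1) hπ0)
      (mul_nonneg hδ0 ht0)), mul_nonneg hδ0 hπ0]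

theorem modified_scheme_close_general
    {Ω 𝒜 : Type*} [Fintype Ω] [Fintype 𝒜]
    (p₀ : ℝ) (hp₀ : 0 < p₀)
    (μ : Ω → ℝ) (hμsum : ∑ ω, μ ω = 1) (hμlb : ∀ ω, p₀ ≤ μ ω)
    -- recommendation scheme π*
    (πstar : Ω → 𝒜 → ℝ) (hπ : ∀ ω a, 0 ≤ πstar ω a) (hπsum : ∀ ω, ∑ a, πstar ω a = 1)
    -- beliefs η_a
    (η : 𝒜 → Ω → ℝ) (hη : ∀ a ω, 0 ≤ η a ω) (hηsum : ∀ a, ∑ ω, η a ω = 1)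
    (δ y : ℝ) (hδ : δ ∈ Set.Icc (0:ℝ) 1) (hy : y ∈ Set.Icc (0:ℝ) 1)
    -- marginal π*(a), posterior μ_a, mixture ξ_a
    (marg : 𝒜 → ℝ) (hmarg : ∀ a, marg a = ∑ ω, μ ω * πstar ω a)
    (post : 𝒜 → Ω → ℝ) (hpost : ∀ a ω, post a ω = μ ω * πstar ω a / marg a)
    (ξ : 𝒜 → Ω → ℝ) (hξ : ∀ a ω, ξ a ω = (1 - δ) * post a ω + δ * η a ω)
    -- modified scheme on action signals: π̃(a|ω) = (1−y)π*(a)ξ_a(ω)/μ(ω)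
    (πt : Ω → 𝒜 → ℝ) (hπt : ∀ ω a, πt ω a = (1 - y) * marg a * ξ a ω / μ ω) :
    ∀ a, 0 < marg a → ∀ ω, |πt ω a - πstar ω a| ≤ δ / p₀ + y := by
  intro a ha ω
  have hμpos : ∀ ω, 0 < μ ω := fun ω => hp₀.trans_le (hμlb ω)
  have hμ : μ ∈ stdSimplex ℝ Ω := ⟨fun ω => (hμpos ω).le, hμsum⟩
  have hπ' : ∀ ω, πstar ω ∈ stdSimplex ℝ 𝒜 := fun ω => ⟨hπ ω, hπsum ω⟩
  have hη_le : η a ω ≤ 1 := (mem_Icc_of_mem_stdSimplex ⟨hη a, hηsum a⟩ ω).2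
  have hmarg_le : marg a ≤ 1 := hmarg a ▸
    sum_mul_le_one_of_mem_stdSimplex hμ fun ω => (mem_Icc_of_mem_stdSimplex (hπ' ω) a).2
  set t := marg a * η a ω / μ ω with ht
  have hπt_eq : πt ω a = (1 - y) * ((1 - δ) * πstar ω a + δ * t) := by
    rw [hπt, hξ, hpost, ht]
    field_simp [(hμpos ω).ne', ha.ne']
  have ht0 : 0 ≤ t := div_nonneg (mul_nonneg ha.le (hη a ω)) (hμpos ω).le
  have hp₀t : p₀ * t ≤ 1 :=
    calc p₀ * t ≤ μ ω * t := mul_le_mul_of_nonneg_right (hμlb ω) ht0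
      _ = marg a * η a ω := mul_div_cancel₀ _ (hμpos ω).ne'
      _ ≤ 1 := mul_le_one₀ hmarg_le (hη a ω) hη_le
  rw [hπt_eq]
  exact abs_mix_sub_le hp₀ ((hμlb ω).trans (mem_Icc_of_mem_stdSimplex hμ ω).2) hδ hy
    (mem_Icc_of_mem_stdSimplex (hπ' ω) a) ht0 hp₀t

/-- Closeness of the modified signaling scheme: under the construction of
`π̃` from `(μ, π*, {η_a}, δ, y, χ)`, with `μ(ω) ≥ p₀ > 0` for every `ω`, for every action `a`
with `π*(a) > 0` and every state `ω`, one has `|π̃(a|ω) − π*(a|ω)| ≤ δ/p₀ + y`. -/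
theorem modified_scheme_close
    {Ω 𝒜 : Type*} [Fintype Ω] [Fintype 𝒜] [Nonempty Ω] [Nonempty 𝒜]
    (v : 𝒜 → Ω → ℝ) (hv : ∀ a ω, v a ω ∈ Set.Icc (0:ℝ) 1)
    (p₀ : ℝ) (hp₀ : 0 < p₀)
    (μ : Ω → ℝ) (hμ : ∀ ω, 0 ≤ μ ω) (hμsum : ∑ ω, μ ω = 1) (hμlb : ∀ ω, p₀ ≤ μ ω)
    -- recommendation scheme π*
    (πstar : Ω → 𝒜 → ℝ) (hπ : ∀ ω a, 0 ≤ πstar ω a) (hπsum : ∀ ω, ∑ a, πstar ω a = 1)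
    -- beliefs η_a
    (η : 𝒜 → Ω → ℝ) (hη : ∀ a ω, 0 ≤ η a ω) (hηsum : ∀ a, ∑ ω, η a ω = 1)
    (δ y : ℝ) (hδ : δ ∈ Set.Icc (0:ℝ) 1) (hy : y ∈ Set.Icc (0:ℝ) 1)
    (χ : Ω → ℝ) (hχ : ∀ ω, 0 ≤ χ ω) (hχsum : ∑ ω, χ ω = 1)
    -- marginal π*(a), posterior μ_a, mixture ξ_a
    (marg : 𝒜 → ℝ) (hmarg : ∀ a, marg a = ∑ ω, μ ω * πstar ω a)
    (post : 𝒜 → Ω → ℝ) (hpost : ∀ a ω, post a ω = μ ω * πstar ω a / marg a)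
    (ξ : 𝒜 → Ω → ℝ) (hξ : ∀ a ω, ξ a ω = (1 - δ) * post a ω + δ * η a ω)
    -- decomposition μ = (1−y)·Σ_a π*(a)ξ_a + yχ
    (hdecomp : ∀ ω, μ ω = (1 - y) * (∑ a, marg a * ξ a ω) + y * χ ω)
    -- modified scheme on action signals: π̃(a|ω) = (1−y)π*(a)ξ_a(ω)/μ(ω)
    (πt : Ω → 𝒜 → ℝ) (hπt : ∀ ω a, πt ω a = (1 - y) * marg a * ξ a ω / μ ω) :
    ∀ a, 0 < marg a → ∀ ω, |πt ω a - πstar ω a| ≤ δ / p₀ + y :=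
  modified_scheme_close_general p₀ hp₀ μ hμsum hμlb πstar hπ hπsum η hη hηsum δ y hδ hy marg hmarg
    post hpost ξ hξ πt hπt
end

section
/- Robust persuasiveness of the modified signaling scheme: suppose v has inducibility margin D > 0 witnessed by beliefs η_a, that μ(ω) ≥ 2p₀ > 0 for all ω, that π* is obedient for μ (so each action a with π*(a) > 0 is receiver-optimal at its posterior μ_a), and that δ ≥ 2ε/(p₀D) where 0 < ε < p₀. Then for every prior μ' ∈ Δ(Ω) with ‖μ' − μ‖₁ ≤ ε and every a ∈ 𝒜 with π*(a) > 0, the posterior μ'_a induced by signal a under the modified scheme π̃ and prior μ' satisfies Σ_ω μ'_a(ω)(v(a,ω) − v(a',ω)) ≥ 0 for every a' ∈ 𝒜; i.e. every action recommendation of π̃ is persuasive for every prior in the ε-ball around μ. -/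
open Finset

/-!
Write `Δ(ω) = v(a,ω) − v(a',ω)`. Under the true prior `μ`, the unnormalised posterior
expectation `∑ μ π̃(a|·) Δ` equals `(1−y) π*(a) · 𝔼_{ξ_a}[Δ]`, and `𝔼_{ξ_a}[Δ] ≥ δD` because the
`μ_a`-part is nonnegative by obedience while the `η_a`-part is at least `D`. Moving the prior to
`μ'` changes this sum by at most `‖μ' − μ‖₁ · max_ω |π̃(a|ω) Δ(ω)| ≤ ε (1−y) π*(a) / (2p₀)`, since
`ξ_a ≤ 1` and `μ ≥ 2p₀`; the lower bound on `δ` makes the margin `δD` absorb this error.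
-/

section

variable {Ω : Type*} [Fintype Ω]

/-- The normaliser may vanish: then `x / 0 = 0` makes the sum `0`. -/
lemma sum_div_sum_mul_nonneg {w f : Ω → ℝ} (hw : 0 ≤ ∑ ω, w ω)
    (hwf : 0 ≤ ∑ ω, w ω * f ω) : 0 ≤ ∑ ω, w ω / (∑ ω', w ω') * f ω := by
  have hnum : ∑ ω, w ω / (∑ ω', w ω') * f ω = (∑ ω, w ω * f ω) / ∑ ω', w ω' := by
    rw [sum_div]
    exact sum_congr rfl fun ω _ => div_mul_eq_mul_div _ _ _
  rw [hnum]
  exact div_nonneg hwf hw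

lemma div_sum_mem_stdSimplex {w : Ω → ℝ} (hw : ∀ ω, 0 ≤ w ω) (hpos : 0 < ∑ ω, w ω) :
    (fun ω => w ω / ∑ ω', w ω') ∈ stdSimplex ℝ Ω :=
  ⟨fun ω => div_nonneg (hw ω) hpos.le, by rw [← sum_div, div_self hpos.ne']⟩

lemma abs_sum_mul_le_sum_abs_mul {d h : Ω → ℝ} {B : ℝ} (hh : ∀ ω, |h ω| ≤ B) :
    |∑ ω, d ω * h ω| ≤ (∑ ω, |d ω|) * B :=
  calc |∑ ω, d ω * h ω| ≤ ∑ ω, |d ω * h ω| := abs_sum_le_sum_abs _ _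
    _ ≤ ∑ ω, |d ω| * B := sum_le_sum fun ω _ => by
        rw [abs_mul]
        exact mul_le_mul_of_nonneg_left (hh ω) (abs_nonneg _)
    _ = (∑ ω, |d ω|) * B := (sum_mul _ _ _).symm

lemma sum_mul_nonneg_of_sum_abs_sub_le {μ μ' h : Ω → ℝ} {ε B : ℝ} (hB : 0 ≤ B)
    (hh : ∀ ω, |h ω| ≤ B) (hclose : ∑ ω, |μ' ω - μ ω| ≤ ε)
    (hmargin : ε * B ≤ ∑ ω, μ ω * h ω) : 0 ≤ ∑ ω, μ' ω * h ω := by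
  have hsplit : ∑ ω, μ' ω * h ω = ∑ ω, μ ω * h ω + ∑ ω, (μ' ω - μ ω) * h ω := by
    rw [← sum_add_distrib]
    exact sum_congr rfl fun ω _ => by ring
  have herr : |∑ ω, (μ' ω - μ ω) * h ω| ≤ ε * B :=
    (abs_sum_mul_le_sum_abs_mul hh).trans (mul_le_mul_of_nonneg_right hclose hB)
  linarith [neg_abs_le (∑ ω, (μ' ω - μ ω) * h ω)]

lemma mul_le_sum_mix_mul {p q f : Ω → ℝ} {δ D : ℝ} (hδ : δ ∈ Set.Icc (0:ℝ) 1)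
    (hp : 0 ≤ ∑ ω, p ω * f ω) (hq : D ≤ ∑ ω, q ω * f ω) :
    δ * D ≤ ∑ ω, ((1 - δ) * p ω + δ * q ω) * f ω := by
  have hsum : ∑ ω, ((1 - δ) * p ω + δ * q ω) * f ω
      = (1 - δ) * ∑ ω, p ω * f ω + δ * ∑ ω, q ω * f ω := by
    simp only [add_mul, sum_add_distrib, mul_sum, mul_assoc]
  rw [hsum]
  linarith [mul_nonneg (sub_nonneg.2 hδ.2) hp, mul_le_mul_of_nonneg_left hq hδ.1]

end

theorem modified_scheme_robustly_persuasive_general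
    {Ω 𝒜 : Type*} [Fintype Ω] [Fintype 𝒜]
    (v : 𝒜 → Ω → ℝ) (hv : ∀ a ω, v a ω ∈ Set.Icc (0:ℝ) 1)
    -- inducibility margin D witnessed by the η_a
    (D : ℝ) (hD : 0 < D)
    (η : 𝒜 → Ω → ℝ) (hη : ∀ a ω, 0 ≤ η a ω) (hηsum : ∀ a, ∑ ω, η a ω = 1)
    (hmargin : ∀ a a', a' ≠ a → D ≤ ∑ ω, η a ω * (v a ω - v a' ω))
    -- full-support prior μ with μ(ω) ≥ 2p₀
    (p₀ : ℝ) (hp₀ : 0 < p₀)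
    (μ : Ω → ℝ) (hμlb : ∀ ω, 2 * p₀ ≤ μ ω)
    -- obedient recommendation scheme π*
    (πstar : Ω → 𝒜 → ℝ) (hπ : ∀ ω a, 0 ≤ πstar ω a)
    (hobed : ∀ a a', 0 ≤ ∑ ω, μ ω * πstar ω a * (v a ω - v a' ω))
    -- parameters of the modified scheme
    (ε : ℝ) (hε0 : 0 < ε)
    (δ y : ℝ) (hδ : δ ∈ Set.Icc (0:ℝ) 1) (hδlb : 2 * ε / (p₀ * D) ≤ δ)
    (hy : y ∈ Set.Icc (0:ℝ) 1)
    (marg : 𝒜 → ℝ) (hmarg : ∀ a, marg a = ∑ ω, μ ω * πstar ω a)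
    (post : 𝒜 → Ω → ℝ) (hpost : ∀ a ω, post a ω = μ ω * πstar ω a / marg a)
    (ξ : 𝒜 → Ω → ℝ) (hξ : ∀ a ω, ξ a ω = (1 - δ) * post a ω + δ * η a ω)
    (πt : Ω → 𝒜 → ℝ) (hπt : ∀ ω a, πt ω a = (1 - y) * marg a * ξ a ω / μ ω) :
    ∀ μ' : Ω → ℝ, (∀ ω, 0 ≤ μ' ω) → (∑ ω, μ' ω = 1) →
      (∑ ω, |μ' ω - μ ω|) ≤ ε →
      ∀ a, 0 < marg a → ∀ a' : 𝒜,
        0 ≤ ∑ ω, (μ' ω * πt ω a / (∑ ω', μ' ω' * πt ω' a)) * (v a ω - v a' ω) := by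
  intro μ' hμ'0 _ hclose a ha a'
  rcases eq_or_ne a' a with rfl | hne
  · simp
  have hμpos : ∀ ω, 0 < μ ω := fun ω => by linarith [hμlb ω]
  have hpost_a : ∀ ω, post a ω = μ ω * πstar ω a / ∑ ω', μ ω' * πstar ω' a := fun ω => by
    rw [hpost, hmarg]
  have hξ_mem : ξ a ∈ stdSimplex ℝ Ω := by
    rw [show ξ a = (1 - δ) • post a + δ • η a from funext (hξ a), funext hpost_a]
    exact convex_stdSimplex ℝ Ω
      (div_sum_mem_stdSimplex (fun ω => mul_nonneg (hμpos ω).le (hπ ω a)) (hmarg a ▸ ha))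
      ⟨hη a, hηsum a⟩ (sub_nonneg.2 hδ.2) hδ.1 (by ring)
  have hξ_gain : δ * D ≤ ∑ ω, ξ a ω * (v a ω - v a' ω) := by
    simp only [hξ]
    refine mul_le_sum_mix_mul hδ ?_ (hmargin a a' hne)
    simp only [hpost_a]
    exact sum_div_sum_mul_nonneg (hmarg a ▸ ha.le) (hobed a a')
  have hscale : 0 ≤ (1 - y) * marg a := mul_nonneg (sub_nonneg.2 hy.2) ha.le
  have hπt0 : ∀ ω, 0 ≤ πt ω a := fun ω => by
    rw [hπt]
    exact div_nonneg (mul_nonneg hscale (hξ_mem.1 ω)) (hμpos ω).le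
  have hπt_gain_le : ∀ ω, |πt ω a * (v a ω - v a' ω)| ≤ (1 - y) * marg a / (2 * p₀) := by
    intro ω
    have hΔ : |v a ω - v a' ω| ≤ 1 :=
      abs_sub_le_of_nonneg_of_le (hv a ω).1 (hv a ω).2 (hv a' ω).1 (hv a' ω).2
    calc |πt ω a * (v a ω - v a' ω)| ≤ πt ω a := by
          rw [abs_mul, abs_of_nonneg (hπt0 ω)]
          exact mul_le_of_le_one_right (hπt0 ω) hΔ
      _ ≤ (1 - y) * marg a / (2 * p₀) := by
          rw [hπt]
          exact div_le_div₀ hscale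
            (mul_le_of_le_one_right hscale (mem_Icc_of_mem_stdSimplex hξ_mem ω).2)
            (by positivity) (hμlb ω)
  have hprior_gain : ∑ ω, μ ω * (πt ω a * (v a ω - v a' ω))
      = (1 - y) * marg a * ∑ ω, ξ a ω * (v a ω - v a' ω) := by
    rw [mul_sum]
    refine sum_congr rfl fun ω _ => ?_
    rw [hπt]
    field_simp [(hμpos ω).ne']
  have hδD : ε / (2 * p₀) ≤ δ * D := by
    rw [← div_div, div_le_iff₀ hD] at hδlb
    refine le_trans ?_ hδlb
    rw [div_le_div_iff₀ (by positivity) hp₀]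
    nlinarith
  refine sum_div_sum_mul_nonneg (w := fun ω => μ' ω * πt ω a)
    (sum_nonneg fun ω _ => mul_nonneg (hμ'0 ω) (hπt0 ω)) ?_
  simp only [mul_assoc]
  refine sum_mul_nonneg_of_sum_abs_sub_le (by positivity) hπt_gain_le hclose ?_
  calc ε * ((1 - y) * marg a / (2 * p₀)) = (1 - y) * marg a * (ε / (2 * p₀)) := by ring
    _ ≤ (1 - y) * marg a * ∑ ω, ξ a ω * (v a ω - v a' ω) :=
        mul_le_mul_of_nonneg_left (hδD.trans hξ_gain) hscale
    _ = ∑ ω, μ ω * (πt ω a * (v a ω - v a' ω)) := hprior_gain.symm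

/-- Robust persuasiveness of the modified signaling scheme: if `v` has
inducibility margin `D > 0` witnessed by the beliefs `η_a`, `μ(ω) ≥ 2p₀ > 0` for all `ω`,
`π*` is obedient for `μ`, and `δ ≥ 2ε/(p₀D)` with `0 < ε < p₀`, then for every prior `μ'`
with `‖μ' − μ‖₁ ≤ ε` and every action `a` with `π*(a) > 0`, the posterior induced by signal
`a` under the modified scheme `π̃` and prior `μ'` makes `a` a best response, i.e. every
action recommendation of `π̃` is persuasive for every prior in the `ε`-ball around `μ`. -/
theorem modified_scheme_robustly_persuasive
    {Ω 𝒜 : Type*} [Fintype Ω] [Fintype 𝒜] [Nonempty Ω] [Nonempty 𝒜]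
    (v : 𝒜 → Ω → ℝ) (hv : ∀ a ω, v a ω ∈ Set.Icc (0:ℝ) 1)
    -- inducibility margin D witnessed by the η_a
    (D : ℝ) (hD : 0 < D)
    (η : 𝒜 → Ω → ℝ) (hη : ∀ a ω, 0 ≤ η a ω) (hηsum : ∀ a, ∑ ω, η a ω = 1)
    (hmargin : ∀ a a', a' ≠ a → D ≤ ∑ ω, η a ω * (v a ω - v a' ω))
    -- full-support prior μ with μ(ω) ≥ 2p₀
    (p₀ : ℝ) (hp₀ : 0 < p₀)
    (μ : Ω → ℝ) (hμ : ∀ ω, 0 ≤ μ ω) (hμsum : ∑ ω, μ ω = 1) (hμlb : ∀ ω, 2 * p₀ ≤ μ ω)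
    -- obedient recommendation scheme π*
    (πstar : Ω → 𝒜 → ℝ) (hπ : ∀ ω a, 0 ≤ πstar ω a) (hπsum : ∀ ω, ∑ a, πstar ω a = 1)
    (hobed : ∀ a a', 0 ≤ ∑ ω, μ ω * πstar ω a * (v a ω - v a' ω))
    -- parameters of the modified scheme
    (ε : ℝ) (hε0 : 0 < ε) (hεp₀ : ε < p₀)
    (δ y : ℝ) (hδ : δ ∈ Set.Icc (0:ℝ) 1) (hδlb : 2 * ε / (p₀ * D) ≤ δ)
    (hy : y ∈ Set.Icc (0:ℝ) 1)
    (χ : Ω → ℝ) (hχ : ∀ ω, 0 ≤ χ ω) (hχsum : ∑ ω, χ ω = 1)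
    (marg : 𝒜 → ℝ) (hmarg : ∀ a, marg a = ∑ ω, μ ω * πstar ω a)
    (post : 𝒜 → Ω → ℝ) (hpost : ∀ a ω, post a ω = μ ω * πstar ω a / marg a)
    (ξ : 𝒜 → Ω → ℝ) (hξ : ∀ a ω, ξ a ω = (1 - δ) * post a ω + δ * η a ω)
    (hdecomp : ∀ ω, μ ω = (1 - y) * (∑ a, marg a * ξ a ω) + y * χ ω)
    (πt : Ω → 𝒜 → ℝ) (hπt : ∀ ω a, πt ω a = (1 - y) * marg a * ξ a ω / μ ω) :
    ∀ μ' : Ω → ℝ, (∀ ω, 0 ≤ μ' ω) → (∑ ω, μ' ω = 1) →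
      (∑ ω, |μ' ω - μ ω|) ≤ ε →
      ∀ a, 0 < marg a → ∀ a' : 𝒜,
        0 ≤ ∑ ω, (μ' ω * πt ω a / (∑ ω', μ' ω' * πt ω' a)) * (v a ω - v a' ω) :=
  modified_scheme_robustly_persuasive_general v hv D hD η hη hηsum hmargin p₀ hp₀ μ hμlb πstar hπ
    hobed ε hε0 δ y hδ hδlb hy marg hmarg post hpost ξ hξ πt hπt
end

section
/- Near-optimality of the modified signaling scheme on action recommendations: under the construction of π̃ from (μ, π*, {η_a}, δ, y, χ), with μ(ω) ≥ p₀ > 0 for every ω, y ≤ δ/p₀, and sender utility u : 𝒜 × Ω → [0,1], the expected sender utility from action-recommendation signals satisfies U_𝒜(π̃) ≥ U_𝒜(π*) − 2δ/p₀, where U_𝒜(π) = Σ_ω μ₀(ω) Σ_{a∈𝒜} π(a|ω)u(a,ω). -/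
/-!
Recommending `a` in state `ω` under `π̃` keeps at least the fraction `(1 - y)(1 - δ)` of the
probability it has under `π*`: the posterior `μ_a` enters `ξ_a` with weight `1 - δ`, and
`π*(a) μ_a(ω) = μ(ω) π*(a|ω)`, while the `η_a` part only adds mass. Since `u ≥ 0`, the same
fraction of `U_𝒜(π*) ≤ 1` survives, so the loss is at most `y + δ ≤ 2δ/p₀` (note `p₀ ≤ 1`).
-/

open Finset

section

variable {Ω 𝒜 : Type*} [Fintype Ω] [Fintype 𝒜]

theorem sum_mul_div_sum_cancel {w : Ω → ℝ} (hw : ∀ ω, 0 ≤ w ω) (ω : Ω) :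
    (∑ ω', w ω') * (w ω / ∑ ω', w ω') = w ω :=
  mul_div_cancel_of_imp' fun h => (sum_eq_zero_iff_of_nonneg fun ω' _ => hw ω').mp h ω (mem_univ ω)

theorem mul_le_mixture_div {μ m p π η δ y : ℝ} (hμ : 0 < μ) (hm : 0 ≤ m) (hη : 0 ≤ η)
    (hδ : 0 ≤ δ) (hy : y ≤ 1) (hmp : m * p = μ * π) :
    (1 - y) * (1 - δ) * π ≤ (1 - y) * m * ((1 - δ) * p + δ * η) / μ := by
  rw [le_div_iff₀ hμ]
  have hextra : 0 ≤ (1 - y) * δ * (m * η) :=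
    mul_nonneg (mul_nonneg (sub_nonneg.2 hy) hδ) (mul_nonneg hm hη)
  linear_combination (-(1 - y) * (1 - δ)) * hmp + hextra

theorem sub_add_le_one_sub_mul_one_sub_mul {U y δ : ℝ} (hU0 : 0 ≤ U) (hU1 : U ≤ 1)
    (hy : 0 ≤ y) (hδ : 0 ≤ δ) : U - (y + δ) ≤ (1 - y) * (1 - δ) * U := by
  nlinarith [mul_nonneg (mul_nonneg hy hδ) hU0]

/-- The sender's expected utility `U_𝒜(π)` from the recommendation signals `a ∈ 𝒜`. -/
noncomputable def recommendationUtility (μ₀ : Ω → ℝ) (π : Ω → 𝒜 → ℝ) (u : 𝒜 → Ω → ℝ) : ℝ :=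
  ∑ ω, μ₀ ω * ∑ a, π ω a * u a ω

variable {μ₀ : Ω → ℝ} {u : 𝒜 → Ω → ℝ}

theorem recommendationUtility_nonneg {π : Ω → 𝒜 → ℝ} (hμ₀ : ∀ ω, 0 ≤ μ₀ ω)
    (hπ : ∀ ω a, 0 ≤ π ω a) (hu : ∀ a ω, 0 ≤ u a ω) :
    0 ≤ recommendationUtility μ₀ π u :=
  sum_nonneg fun ω _ => mul_nonneg (hμ₀ ω) (sum_nonneg fun a _ => mul_nonneg (hπ ω a) (hu a ω))

theorem recommendationUtility_le_one {π : Ω → 𝒜 → ℝ} (hμ₀ : ∀ ω, 0 ≤ μ₀ ω)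
    (hμ₀sum : ∑ ω, μ₀ ω = 1) (hπ : ∀ ω a, 0 ≤ π ω a) (hπsum : ∀ ω, ∑ a, π ω a = 1)
    (hu : ∀ a ω, u a ω ≤ 1) :
    recommendationUtility μ₀ π u ≤ 1 := by
  rw [← hμ₀sum]
  refine sum_le_sum fun ω _ => mul_le_of_le_one_right (hμ₀ ω) ?_
  calc ∑ a, π ω a * u a ω ≤ ∑ a, π ω a :=
        sum_le_sum fun a _ => mul_le_of_le_one_right (hπ ω a) (hu a ω)
    _ = 1 := hπsum ω

theorem mul_recommendationUtility_le {π π' : Ω → 𝒜 → ℝ} {c : ℝ} (hμ₀ : ∀ ω, 0 ≤ μ₀ ω)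
    (hu : ∀ a ω, 0 ≤ u a ω) (h : ∀ ω a, c * π ω a ≤ π' ω a) :
    c * recommendationUtility μ₀ π u ≤ recommendationUtility μ₀ π' u := by
  rw [recommendationUtility, recommendationUtility, mul_sum]
  refine sum_le_sum fun ω _ => ?_
  rw [mul_left_comm, mul_sum]
  refine mul_le_mul_of_nonneg_left (sum_le_sum fun a _ => ?_) (hμ₀ ω)
  rw [← mul_assoc]
  exact mul_le_mul_of_nonneg_right (h ω a) (hu a ω)

end

theorem modified_scheme_near_optimal_general
    {Ω 𝒜 : Type*} [Fintype Ω] [Fintype 𝒜] [Nonempty Ω]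
    (u : 𝒜 → Ω → ℝ)
    (hu : ∀ a ω, u a ω ∈ Set.Icc (0:ℝ) 1)
    -- sender prior
    (μ₀ : Ω → ℝ) (hμ₀pos : ∀ ω, 0 < μ₀ ω) (hμ₀sum : ∑ ω, μ₀ ω = 1)
    -- full-support receiver prior
    (p₀ : ℝ) (hp₀ : 0 < p₀)
    (μ : Ω → ℝ) (hμ : ∀ ω, 0 ≤ μ ω) (hμsum : ∑ ω, μ ω = 1) (hμlb : ∀ ω, p₀ ≤ μ ω)
    -- recommendation scheme π*
    (πstar : Ω → 𝒜 → ℝ) (hπ : ∀ ω a, 0 ≤ πstar ω a) (hπsum : ∀ ω, ∑ a, πstar ω a = 1)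
    -- beliefs η_a and parameters
    (η : 𝒜 → Ω → ℝ) (hη : ∀ a ω, 0 ≤ η a ω)
    (δ y : ℝ) (hδ : δ ∈ Set.Icc (0:ℝ) 1) (hy : y ∈ Set.Icc (0:ℝ) 1)
    (hyδ : y ≤ δ / p₀)
    (marg : 𝒜 → ℝ) (hmarg : ∀ a, marg a = ∑ ω, μ ω * πstar ω a)
    (post : 𝒜 → Ω → ℝ) (hpost : ∀ a ω, post a ω = μ ω * πstar ω a / marg a)
    (ξ : 𝒜 → Ω → ℝ) (hξ : ∀ a ω, ξ a ω = (1 - δ) * post a ω + δ * η a ω)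
    (πt : Ω → 𝒜 → ℝ) (hπt : ∀ ω a, πt ω a = (1 - y) * marg a * ξ a ω / μ ω) :
    (∑ ω, μ₀ ω * ∑ a, πstar ω a * u a ω) - 2 * δ / p₀ ≤
      ∑ ω, μ₀ ω * ∑ a, πt ω a * u a ω := by
  have hμ₀ : ∀ ω, 0 ≤ μ₀ ω := fun ω => (hμ₀pos ω).le
  have hp₀_le_one : p₀ ≤ 1 := by
    obtain ⟨ω⟩ := ‹Nonempty Ω›
    exact (hμlb ω).trans (hμsum ▸ single_le_sum (fun ω _ => hμ ω) (mem_univ ω))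
  have hπt_ge : ∀ ω a, (1 - y) * (1 - δ) * πstar ω a ≤ πt ω a := by
    intro ω a
    have hweights : ∀ ω', 0 ≤ μ ω' * πstar ω' a := fun ω' => mul_nonneg (hμ ω') (hπ ω' a)
    have hmarg_post : marg a * post a ω = μ ω * πstar ω a := by
      rw [hpost, hmarg]
      exact sum_mul_div_sum_cancel hweights ω
    rw [hπt, hξ]
    exact mul_le_mixture_div (hp₀.trans_le (hμlb ω)) (hmarg a ▸ sum_nonneg fun ω' _ => hweights ω')
      (hη a ω) hδ.1 hy.2 hmarg_post
  have hU0 := recommendationUtility_nonneg hμ₀ hπ fun a ω => (hu a ω).1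
  have hU1 := recommendationUtility_le_one hμ₀ hμ₀sum hπ hπsum fun a ω => (hu a ω).2
  have hδ_le : δ ≤ δ / p₀ := le_div_self hδ.1 hp₀ hp₀_le_one
  calc (∑ ω, μ₀ ω * ∑ a, πstar ω a * u a ω) - 2 * δ / p₀
      ≤ recommendationUtility μ₀ πstar u - (y + δ) := by
        rw [recommendationUtility, mul_div_assoc]; linarith
    _ ≤ (1 - y) * (1 - δ) * recommendationUtility μ₀ πstar u :=
        sub_add_le_one_sub_mul_one_sub_mul hU0 hU1 hy.1 hδ.1
    _ ≤ recommendationUtility μ₀ πt u := mul_recommendationUtility_le hμ₀ (fun a ω => (hu a ω).1) hπt_ge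

/-- Near-optimality of the modified signaling scheme on action
recommendations: under the construction of `π̃` from `(μ, π*, {η_a}, δ, y, χ)`, with
`μ(ω) ≥ p₀ > 0` and `y ≤ δ/p₀`, the sender utility from action-recommendation signals
satisfies `U_𝒜(π̃) ≥ U_𝒜(π*) − 2δ/p₀`. -/
theorem modified_scheme_near_optimal
    {Ω 𝒜 : Type*} [Fintype Ω] [Fintype 𝒜] [Nonempty Ω] [Nonempty 𝒜]
    (u v : 𝒜 → Ω → ℝ)
    (hu : ∀ a ω, u a ω ∈ Set.Icc (0:ℝ) 1)
    (hv : ∀ a ω, v a ω ∈ Set.Icc (0:ℝ) 1)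
    -- sender prior
    (μ₀ : Ω → ℝ) (hμ₀pos : ∀ ω, 0 < μ₀ ω) (hμ₀sum : ∑ ω, μ₀ ω = 1)
    -- full-support receiver prior
    (p₀ : ℝ) (hp₀ : 0 < p₀)
    (μ : Ω → ℝ) (hμ : ∀ ω, 0 ≤ μ ω) (hμsum : ∑ ω, μ ω = 1) (hμlb : ∀ ω, p₀ ≤ μ ω)
    -- recommendation scheme π*
    (πstar : Ω → 𝒜 → ℝ) (hπ : ∀ ω a, 0 ≤ πstar ω a) (hπsum : ∀ ω, ∑ a, πstar ω a = 1)
    -- beliefs η_a and parameters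
    (η : 𝒜 → Ω → ℝ) (hη : ∀ a ω, 0 ≤ η a ω) (hηsum : ∀ a, ∑ ω, η a ω = 1)
    (δ y : ℝ) (hδ : δ ∈ Set.Icc (0:ℝ) 1) (hy : y ∈ Set.Icc (0:ℝ) 1)
    (hyδ : y ≤ δ / p₀)
    (χ : Ω → ℝ) (hχ : ∀ ω, 0 ≤ χ ω) (hχsum : ∑ ω, χ ω = 1)
    (marg : 𝒜 → ℝ) (hmarg : ∀ a, marg a = ∑ ω, μ ω * πstar ω a)
    (post : 𝒜 → Ω → ℝ) (hpost : ∀ a ω, post a ω = μ ω * πstar ω a / marg a)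
    (ξ : 𝒜 → Ω → ℝ) (hξ : ∀ a ω, ξ a ω = (1 - δ) * post a ω + δ * η a ω)
    (hdecomp : ∀ ω, μ ω = (1 - y) * (∑ a, marg a * ξ a ω) + y * χ ω)
    (πt : Ω → 𝒜 → ℝ) (hπt : ∀ ω a, πt ω a = (1 - y) * marg a * ξ a ω / μ ω) :
    (∑ ω, μ₀ ω * ∑ a, πstar ω a * u a ω) - 2 * δ / p₀ ≤
      ∑ ω, μ₀ ω * ∑ a, πt ω a * u a ω :=
  modified_scheme_near_optimal_general u hu μ₀ hμ₀pos hμ₀sum p₀ hp₀ μ hμ hμsum hμlb πstar hπ hπsum η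
    hη δ y hδ hy hyδ marg hmarg post hpost ξ hξ πt hπt
end

section
/- Existence of a near-obedient n-uniform prior (core lemma of the QPTAS): let μ* ∈ Δ(Ω) and let π* : Ω → Δ(𝒜) be obedient for μ*, i.e. Σ_ω μ*(ω)π*(a|ω)(v(a,ω) − v(a',ω)) ≥ 0 for all a, a' ∈ 𝒜, where v takes values in [0,1]. Then for every ε > 0 and every positive integer n with |𝒜|²·exp(−nε²/2) < 1 (e.g. n > 4·ln|𝒜|/ε²), there exists μ̂ ∈ Δ(Ω) with n·μ̂(ω) a nonnegative integer for every ω ∈ Ω such that Σ_ω μ̂(ω)π*(a|ω)(v(a,ω) − v(a',ω)) ≥ −ε for all a, a' ∈ 𝒜. -/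
/-!
Sample `n` states i.i.d. from `μ*` and let `μ̂` be their empirical distribution. For each pair
`(a, a')` the obedience gap `π*(a|ω)(v(a,ω) − v(a',ω))` lies in `[-1, 1]` and has nonnegative
mean under `μ*`, so by Hoeffding's inequality its empirical mean falls to `−ε` or below with
probability at most `exp(−nε²/2)`. A union bound over the `|𝒜|²` pairs leaves positive
probability that no constraint is violated by more than `ε`.
-/

open Finset MeasureTheory ProbabilityTheory Real

section EmpiricalDistribution

variable {ι Ω : Type*} [Fintype ι] [DecidableEq Ω]

noncomputable def empiricalDist (s : ι → Ω) (ω : Ω) : ℝ := #{i | s i = ω} / Fintype.card ι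

lemma empiricalDist_nonneg (s : ι → Ω) (ω : Ω) : 0 ≤ empiricalDist s ω := by
  unfold empiricalDist
  positivity

lemma sum_empiricalDist_mul [Fintype Ω] (s : ι → Ω) (f : Ω → ℝ) :
    ∑ ω, empiricalDist s ω * f ω = (∑ i, f (s i)) / Fintype.card ι := by
  rw [← sum_fiberwise' univ s f, sum_div]
  refine sum_congr rfl fun ω _ => ?_
  rw [sum_const, nsmul_eq_mul, empiricalDist, div_mul_eq_mul_div]

lemma sum_empiricalDist [Fintype Ω] [Nonempty ι] (s : ι → Ω) : ∑ ω, empiricalDist s ω = 1 := by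
  simpa using sum_empiricalDist_mul s 1

end EmpiricalDistribution

lemma exists_isProbabilityMeasure_integral_eq_sum {Ω : Type*} [Fintype Ω] [MeasurableSpace Ω]
    [MeasurableSingletonClass Ω] {μ : Ω → ℝ} (hμ : ∀ ω, 0 ≤ μ ω) (hμsum : ∑ ω, μ ω = 1) :
    ∃ ρ : Measure Ω, IsProbabilityMeasure ρ ∧ ∀ f : Ω → ℝ, ∫ ω, f ω ∂ρ = ∑ ω, μ ω * f ω := by
  have hsum : ∑ ω, ENNReal.ofReal (μ ω) = 1 := by
    rw [← ENNReal.ofReal_sum_of_nonneg fun ω _ => hμ ω, hμsum, ENNReal.ofReal_one]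
  refine ⟨(PMF.ofFintype _ hsum).toMeasure, inferInstance, fun f => ?_⟩
  simp [PMF.integral_eq_sum, ENNReal.toReal_ofReal (hμ _)]

lemma hasSubgaussianMGF_integral_sub_comp_eval {Ω ι : Type*} [MeasurableSpace Ω] [Fintype ι]
    (ρ : Measure Ω) [IsProbabilityMeasure ρ] {f : Ω → ℝ} (hf : Measurable f)
    (hf_bdd : ∀ ω, f ω ∈ Set.Icc (-1 : ℝ) 1) (i : ι) :
    HasSubgaussianMGF (fun s : ι → Ω => ∫ ω, f ω ∂ρ - f (s i)) 1
      (Measure.pi fun _ : ι => ρ) := by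
  have h := hasSubgaussianMGF_of_mem_Icc (μ := Measure.pi fun _ : ι => ρ)
    (X := fun s : ι → Ω => -f (s i))
    (hf.comp (measurable_pi_apply i)).neg.aemeasurable
    (ae_of_all _ fun s => ⟨neg_le_neg (hf_bdd (s i)).2, neg_le.mp (hf_bdd (s i)).1⟩)
  have h_mean : ∫ s, -f (s i) ∂(Measure.pi fun _ : ι => ρ) = ∫ ω, -f ω ∂ρ :=
    integral_comp_eval (X := fun _ : ι => Ω) (μ := fun _ => ρ) (i := i) (f := fun ω => -f ω)
      hf.neg.aestronglyMeasurable
  rw [h_mean] at h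
  convert h using 1
  · ext s
    simp only [integral_neg, sub_neg_eq_add]
    ring
  · norm_num

lemma measureReal_pi_sum_le_neg_le {Ω ι : Type*} [MeasurableSpace Ω] [Fintype ι]
    (ρ : Measure Ω) [IsProbabilityMeasure ρ] {f : Ω → ℝ} (hf : Measurable f)
    (hf_bdd : ∀ ω, f ω ∈ Set.Icc (-1 : ℝ) 1) (hmean : 0 ≤ ∫ ω, f ω ∂ρ) {ε : ℝ} (hε : 0 ≤ ε) :
    (Measure.pi fun _ : ι => ρ).real {s | ∑ i, f (s i) ≤ -(Fintype.card ι * ε)}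
      ≤ exp (-Fintype.card ι * ε ^ 2 / 2) := by
  set n : ℝ := (Fintype.card ι : ℝ)
  have hoeffding := HasSubgaussianMGF.measure_sum_ge_le_of_iIndepFun
    (iIndepFun_pi (μ := fun _ : ι => ρ) fun _ => (measurable_const.sub hf).aemeasurable)
    (s := univ) (fun i _ => hasSubgaussianMGF_integral_sub_comp_eval ρ hf hf_bdd i)
    (mul_nonneg (Nat.cast_nonneg (Fintype.card ι)) hε)
  simp only [Pi.sub_apply, sum_sub_distrib, sum_const, card_univ, nsmul_eq_mul,
    NNReal.coe_natCast, mul_one] at hoeffding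
  calc _ ≤ (Measure.pi fun _ : ι => ρ).real
          {s | n * ε ≤ n * ∫ ω, f ω ∂ρ - ∑ i, f (s i)} :=
        measureReal_mono <| Set.ofPred_subset_ofPred.mpr fun s hs => by
          have : 0 ≤ n * ∫ ω, f ω ∂ρ := mul_nonneg (Nat.cast_nonneg _) hmean
          linarith
    _ ≤ exp (-(n * ε) ^ 2 / (2 * n)) := hoeffding
    _ = exp (-n * ε ^ 2 / 2) := by
      rcases eq_or_ne n 0 with h | h
      · simp [h]
      · congr 1; field_simp

lemma exists_forall_neg_lt_sum {Ω ι κ : Type*} [MeasurableSpace Ω] [Fintype ι] [Fintype κ]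
    (ρ : Measure Ω) [IsProbabilityMeasure ρ] {f : κ → Ω → ℝ} (hf : ∀ k, Measurable (f k))
    (hf_bdd : ∀ k ω, f k ω ∈ Set.Icc (-1 : ℝ) 1) (hmean : ∀ k, 0 ≤ ∫ ω, f k ω ∂ρ)
    {ε : ℝ} (hε : 0 ≤ ε) (hcard : Fintype.card κ * exp (-Fintype.card ι * ε ^ 2 / 2) < 1) :
    ∃ s : ι → Ω, ∀ k, -(Fintype.card ι * ε) < ∑ i, f k (s i) := by
  by_contra! h_bad
  set P := Measure.pi fun _ : ι => ρ
  have h_cover : Set.univ ⊆ ⋃ k, {s : ι → Ω | ∑ i, f k (s i) ≤ -(Fintype.card ι * ε)} :=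
    fun s _ => Set.mem_iUnion.mpr (h_bad s)
  have : (1 : ℝ) ≤ Fintype.card κ * exp (-Fintype.card ι * ε ^ 2 / 2) :=
    calc (1 : ℝ) = P.real Set.univ := probReal_univ.symm
      _ ≤ ∑ k, P.real {s | ∑ i, f k (s i) ≤ -(Fintype.card ι * ε)} :=
        (measureReal_mono h_cover).trans (measureReal_iUnion_fintype_le _)
      _ ≤ ∑ _k : κ, exp (-Fintype.card ι * ε ^ 2 / 2) :=
        sum_le_sum fun k _ => measureReal_pi_sum_le_neg_le ρ (hf k) (hf_bdd k) (hmean k) hε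
      _ = _ := by rw [sum_const, card_univ, nsmul_eq_mul]
  linarith

lemma mul_sub_mem_Icc {p x y : ℝ} (hp : p ∈ Set.Icc (0 : ℝ) 1) (hx : x ∈ Set.Icc (0 : ℝ) 1)
    (hy : y ∈ Set.Icc (0 : ℝ) 1) : p * (x - y) ∈ Set.Icc (-1 : ℝ) 1 := by
  obtain ⟨hp0, hp1⟩ := hp
  obtain ⟨hx0, hx1⟩ := hx
  obtain ⟨hy0, hy1⟩ := hy
  constructor <;> nlinarith

theorem nuniform_near_obedient_prior_exists_general
    {Ω 𝒜 : Type*} [Fintype Ω] [Fintype 𝒜]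
    (v : 𝒜 → Ω → ℝ) (hv : ∀ a ω, v a ω ∈ Set.Icc (0:ℝ) 1)
    (μstar : Ω → ℝ) (hμ : ∀ ω, 0 ≤ μstar ω) (hμsum : ∑ ω, μstar ω = 1)
    (πstar : Ω → 𝒜 → ℝ) (hπ : ∀ ω a, 0 ≤ πstar ω a) (hπsum : ∀ ω, ∑ a, πstar ω a = 1)
    (hobed : ∀ a a', 0 ≤ ∑ ω, μstar ω * πstar ω a * (v a ω - v a' ω))
    (ε : ℝ) (hε : 0 < ε)
    (n : ℕ) (hn : 0 < n)
    (hcard : (Fintype.card 𝒜 : ℝ) ^ 2 * Real.exp (-(n : ℝ) * ε ^ 2 / 2) < 1) :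
    ∃ μhat : Ω → ℝ,
      (∀ ω, 0 ≤ μhat ω) ∧ (∑ ω, μhat ω = 1) ∧
      (∀ ω, ∃ k : ℕ, μhat ω = (k : ℝ) / (n : ℝ)) ∧
      ∀ a a', -ε ≤ ∑ ω, μhat ω * πstar ω a * (v a ω - v a' ω) := by
  classical
  let _ : MeasurableSpace Ω := ⊤
  obtain ⟨ρ, hρ, hρ_integral⟩ := exists_isProbabilityMeasure_integral_eq_sum hμ hμsum
  have hπ_mem : ∀ ω a, πstar ω a ∈ Set.Icc (0 : ℝ) 1 := fun ω a =>
    ⟨hπ ω a, hπsum ω ▸ single_le_sum (fun a _ => hπ ω a) (mem_univ a)⟩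
  obtain ⟨s, hs⟩ := exists_forall_neg_lt_sum (ι := Fin n) ρ
    (f := fun p : 𝒜 × 𝒜 => fun ω => πstar ω p.1 * (v p.1 ω - v p.2 ω))
    (fun _ => .of_discrete) (fun p ω => mul_sub_mem_Icc (hπ_mem ω p.1) (hv p.1 ω) (hv p.2 ω))
    (fun p => by simpa [hρ_integral, mul_assoc] using hobed p.1 p.2) hε.le
    (by simpa [sq] using hcard)
  have : Nonempty (Fin n) := ⟨⟨0, hn⟩⟩
  refine ⟨empiricalDist s, empiricalDist_nonneg s, sum_empiricalDist s,
    fun ω => ⟨#{i | s i = ω}, by rw [empiricalDist, Fintype.card_fin]⟩, fun a a' => ?_⟩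
  simp_rw [mul_assoc, sum_empiricalDist_mul, Fintype.card_fin]
  rw [le_div_iff₀ (by exact_mod_cast hn)]
  have h_gap := hs (a, a')
  rw [Fintype.card_fin] at h_gap
  linarith

/-- Existence of a near-obedient `n`-uniform prior (core lemma of the
QPTAS): if `π*` is obedient for `μ*` and `|𝒜|²·exp(−nε²/2) < 1`, then there exists an
`n`-uniform distribution `μ̂` (every coordinate an integer multiple of `1/n`) for which all
obedience constraints are violated by at most `ε`. -/
theorem nuniform_near_obedient_prior_exists
    {Ω 𝒜 : Type*} [Fintype Ω] [Fintype 𝒜] [Nonempty Ω] [Nonempty 𝒜]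
    (v : 𝒜 → Ω → ℝ) (hv : ∀ a ω, v a ω ∈ Set.Icc (0:ℝ) 1)
    (μstar : Ω → ℝ) (hμ : ∀ ω, 0 ≤ μstar ω) (hμsum : ∑ ω, μstar ω = 1)
    (πstar : Ω → 𝒜 → ℝ) (hπ : ∀ ω a, 0 ≤ πstar ω a) (hπsum : ∀ ω, ∑ a, πstar ω a = 1)
    (hobed : ∀ a a', 0 ≤ ∑ ω, μstar ω * πstar ω a * (v a ω - v a' ω))
    (ε : ℝ) (hε : 0 < ε)
    (n : ℕ) (hn : 0 < n)
    (hcard : (Fintype.card 𝒜 : ℝ) ^ 2 * Real.exp (-(n : ℝ) * ε ^ 2 / 2) < 1) :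
    ∃ μhat : Ω → ℝ,
      (∀ ω, 0 ≤ μhat ω) ∧ (∑ ω, μhat ω = 1) ∧
      (∀ ω, ∃ k : ℕ, μhat ω = (k : ℝ) / (n : ℝ)) ∧
      ∀ a a', -ε ≤ ∑ ω, μhat ω * πstar ω a * (v a ω - v a' ω) :=
  nuniform_near_obedient_prior_exists_general v hv μstar hμ hμsum πstar hπ hπsum hobed ε hε n hn
    hcard
end

section
/- Discontinuity of the fixed-scheme sender utility at an indifference prior: let π : Ω → Δ(𝒮) be a signaling scheme with a signal s₀ satisfying π(s₀|ω) > 0 for every ω ∈ Ω. Suppose μ̃ ∈ Δ(Ω) is supported exactly on two distinct states ω₁, ω₂ (μ̃(ω₁) > 0, μ̃(ω₂) > 0, μ̃(ω) = 0 otherwise) and there are actions a₁ ≠ a' such that: (i) Σ_ω μ̃(ω)π(s₀|ω)v(a₁,ω) = Σ_ω μ̃(ω)π(s₀|ω)v(a',ω) > Σ_ω μ̃(ω)π(s₀|ω)v(a,ω) for every a ∉ {a₁, a'}; (ii) v(a₁,ω₁) > v(a',ω₁) and v(a₁,ω₂) < v(a',ω₂); (iii) for every signal s ≠ s₀, the receiver's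 best response under μ̃ to s is a unique strict maximizer. Then there exists ε₀ > 0 such that for all 0 < ε < ε₀, with μ^{+ε} obtained from μ̃ by moving mass ε from ω₂ to ω₁ and μ^{−ε} by moving mass ε from ω₁ to ω₂, one has U_π(μ^{+ε}) − U_π(μ^{−ε}) = Σ_ω μ₀(ω)π(s₀|ω)(u(a₁,ω) − u(a',ω)). Consequently, if this last sum is nonzero, U_π is discontinuous at μ̃. -/
/-!
The perturbation `μ̃ ± ε (δ_{ω₁} - δ_{ω₂})` changes every receiver payoff continuously, so every
strict best response under `μ̃` stays the best response for small `ε`. The only exception is the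
tie at `s₀`: the payoff gap between `a₁` and `a'` is `±ε` times
`π(s₀|ω₁)(v(a₁,ω₁) - v(a',ω₁)) + π(s₀|ω₂)(v(a',ω₂) - v(a₁,ω₂)) > 0`, so the receiver plays `a₁`
on one side and `a'` on the other. The two best-response profiles therefore differ only at `s₀`,
which gives the constant jump; a nonzero jump is incompatible with continuity.
-/

open Finset Filter Topology

theorem eq_of_forall_le_of_forall_ne_lt {α β : Type*} [LinearOrder β] {f : α → β} {x b : α}
    (hx : ∀ a, f a ≤ f x) (hb : ∀ a, a ≠ b → f a < f b) : x = b :=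
  by_contra fun hne => (hb x hne).not_ge (hx b)

theorem tendsto_add_smul_nhds_zero {E : Type*} [AddCommGroup E] [Module ℝ E] [TopologicalSpace E]
    [IsTopologicalAddGroup E] [ContinuousSMul ℝ E] (x d : E) :
    Tendsto (fun ε : ℝ => x + ε • d) (𝓝 0) (𝓝 x) :=
  (continuous_const.add (continuous_id.smul continuous_const)).tendsto' 0 x (by simp)

theorem add_ite_sub_ite_eq_add_smul {Ω : Type*} [DecidableEq Ω] (μ : Ω → ℝ) (ω₁ ω₂ : Ω)
    (ε : ℝ) :
    (fun ω => μ ω + (if ω = ω₁ then ε else 0) - (if ω = ω₂ then ε else 0)) =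
      μ + ε • (Pi.single ω₁ 1 - Pi.single ω₂ 1) := by
  funext ω
  simp only [Pi.add_apply, Pi.smul_apply, Pi.sub_apply, Pi.single_apply, smul_eq_mul]
  split_ifs <;> ring

theorem not_continuousAt_of_eventually_sub_eq {α X : Type*} [TopologicalSpace X] {F : X → ℝ}
    {x : X} {l : Filter α} [l.NeBot] {f g : α → X} (hf : Tendsto f l (𝓝 x))
    (hg : Tendsto g l (𝓝 x)) {c : ℝ} (hc : c ≠ 0) (h : ∀ᶠ t in l, F (f t) - F (g t) = c) :
    ¬ContinuousAt F x := by
  intro hF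
  have hlim := (hF.tendsto.comp hf).sub (hF.tendsto.comp hg)
  rw [sub_self] at hlim
  exact hc (tendsto_nhds_unique (tendsto_const_nhds.congr' (h.mono fun _ ht => ht.symm)) hlim)

section Persuasion

variable {Ω 𝒜 𝒮 : Type*} [Fintype Ω]

def receiverPayoff (π : Ω → 𝒮 → ℝ) (v : 𝒜 → Ω → ℝ) (μ : Ω → ℝ) (s : 𝒮) (a : 𝒜) : ℝ :=
  ∑ ω, μ ω * π ω s * v a ω

def senderUtility [Fintype 𝒮] (μ₀ : Ω → ℝ) (π : Ω → 𝒮 → ℝ) (u : 𝒜 → Ω → ℝ) (σ : 𝒮 → 𝒜) : ℝ :=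
  ∑ ω, μ₀ ω * ∑ s, π ω s * u (σ s) ω

theorem senderUtility_sub_of_forall_ne_eq [Fintype 𝒮] (μ₀ : Ω → ℝ) (π : Ω → 𝒮 → ℝ)
    (u : 𝒜 → Ω → ℝ) {σ τ : 𝒮 → 𝒜} (s₀ : 𝒮) (h : ∀ s, s ≠ s₀ → σ s = τ s) :
    senderUtility μ₀ π u σ - senderUtility μ₀ π u τ =
      ∑ ω, μ₀ ω * π ω s₀ * (u (σ s₀) ω - u (τ s₀) ω) := by
  simp only [senderUtility, ← sum_sub_distrib, ← mul_sub]
  refine sum_congr rfl fun ω _ => ?_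
  rw [sum_eq_single s₀ (fun s _ hs => by rw [h s hs, sub_self, mul_zero]) (by simp), mul_assoc]

variable (π : Ω → 𝒮 → ℝ) (v : 𝒜 → Ω → ℝ)

theorem continuous_receiverPayoff (s : 𝒮) (a : 𝒜) :
    Continuous fun μ => receiverPayoff π v μ s a := by
  unfold receiverPayoff
  fun_prop

theorem receiverPayoff_add_smul (μ d : Ω → ℝ) (ε : ℝ) (s : 𝒮) (a : 𝒜) :
    receiverPayoff π v (μ + ε • d) s a =
      receiverPayoff π v μ s a + ε * receiverPayoff π v d s a := by
  simp only [receiverPayoff, Pi.add_apply, Pi.smul_apply, smul_eq_mul, add_mul, sum_add_distrib,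
    mul_sum, mul_assoc]

theorem receiverPayoff_single_sub_single [DecidableEq Ω] (ω₁ ω₂ : Ω) (s : 𝒮) (a : 𝒜) :
    receiverPayoff π v (Pi.single ω₁ 1 - Pi.single ω₂ 1) s a =
      π ω₁ s * v a ω₁ - π ω₂ s * v a ω₂ := by
  simp [receiverPayoff, Pi.single_apply, sub_mul, sum_sub_distrib]

theorem eventually_forall_receiverPayoff_lt [Finite 𝒜] {μ : Ω → ℝ} {s : 𝒮} {b : 𝒜}
    {p : 𝒜 → Prop} (h : ∀ a, p a → receiverPayoff π v μ s a < receiverPayoff π v μ s b) :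
    ∀ᶠ μ' in 𝓝 μ, ∀ a, p a → receiverPayoff π v μ' s a < receiverPayoff π v μ' s b := by
  refine eventually_all.2 fun a => ?_
  by_cases ha : p a
  · exact ((continuous_receiverPayoff π v s a).continuousAt.eventually_lt
      (continuous_receiverPayoff π v s b).continuousAt (h a ha)).mono fun _ hlt _ => hlt
  · exact .of_forall fun _ hp => absurd hp ha

variable {v} (astar : (Ω → ℝ) → 𝒮 → 𝒜)

theorem eventually_bestResponse_eq_of_strictMax [Finite 𝒜]
    (hbr : ∀ μ s a, receiverPayoff π v μ s a ≤ receiverPayoff π v μ s (astar μ s))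
    {μ : Ω → ℝ} {s : 𝒮} {b : 𝒜}
    (hb : ∀ a, a ≠ b → receiverPayoff π v μ s a < receiverPayoff π v μ s b) :
    ∀ᶠ μ' in 𝓝 μ, astar μ' s = b :=
  (eventually_forall_receiverPayoff_lt π v hb).mono fun μ' h =>
    eq_of_forall_le_of_forall_ne_lt (hbr μ' s) h

theorem eventually_bestResponse_eq_of_tie [Finite 𝒜]
    (hbr : ∀ μ s a, receiverPayoff π v μ s a ≤ receiverPayoff π v μ s (astar μ s))
    {μ d : Ω → ℝ} {s : 𝒮} {b c : 𝒜}
    (htie : receiverPayoff π v μ s c = receiverPayoff π v μ s b)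
    (hothers : ∀ a, a ≠ b → a ≠ c → receiverPayoff π v μ s a < receiverPayoff π v μ s b)
    (hdir : receiverPayoff π v d s c < receiverPayoff π v d s b) :
    ∀ᶠ ε in 𝓝[>] (0 : ℝ), astar (μ + ε • d) s = b := by
  have hnear : ∀ᶠ ε in 𝓝[>] (0 : ℝ), ∀ a, a ≠ b ∧ a ≠ c →
      receiverPayoff π v (μ + ε • d) s a < receiverPayoff π v (μ + ε • d) s b :=
    (tendsto_nhdsWithin_of_tendsto_nhds (tendsto_add_smul_nhds_zero μ d)).eventually
      (eventually_forall_receiverPayoff_lt π v fun a ha => hothers a ha.1 ha.2)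
  filter_upwards [hnear, self_mem_nhdsWithin] with ε hε (hpos : 0 < ε)
  refine eq_of_forall_le_of_forall_ne_lt (hbr _ s) fun a hab => ?_
  by_cases hac : a = c
  · rw [hac, receiverPayoff_add_smul, receiverPayoff_add_smul, htie]
    gcongr
  · exact hε a ⟨hab, hac⟩

end Persuasion

theorem fixed_scheme_sender_utility_discontinuous_general
    {Ω 𝒜 𝒮 : Type*} [Fintype Ω] [Fintype 𝒜] [Fintype 𝒮]
    [DecidableEq Ω]
    (u v : 𝒜 → Ω → ℝ)
    (μ₀ : Ω → ℝ)
    (π : Ω → 𝒮 → ℝ)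
    -- receiver best response (ties broken in favor of the sender)
    (astar : (Ω → ℝ) → 𝒮 → 𝒜)
    (hbr : ∀ (μ : Ω → ℝ) (s : 𝒮) (a : 𝒜),
      ∑ ω, μ ω * π ω s * v a ω ≤ ∑ ω, μ ω * π ω s * v (astar μ s) ω)
    -- the sender's utility as a function of the receiver's prior
    (Uπ : (Ω → ℝ) → ℝ)
    (hU : ∀ μ, Uπ μ = ∑ ω, μ₀ ω * ∑ s, π ω s * u (astar μ s) ω)
    -- a signal sent with positive probability in every state
    (s₀ : 𝒮) (hs₀ : ∀ ω, 0 < π ω s₀)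
    -- the indifference prior, supported exactly on two distinct states
    (μt : Ω → ℝ)
    (ω₁ ω₂ : Ω)
    -- two actions in exact indifference, strictly above all others, at signal s₀
    (a₁ a' : 𝒜)
    (hindiff : ∑ ω, μt ω * π ω s₀ * v a₁ ω = ∑ ω, μt ω * π ω s₀ * v a' ω)
    (hstrict : ∀ a, a ≠ a₁ → a ≠ a' →
      ∑ ω, μt ω * π ω s₀ * v a ω < ∑ ω, μt ω * π ω s₀ * v a₁ ω)
    -- the two actions disagree across the two states
    (hv1 : v a' ω₁ < v a₁ ω₁) (hv2 : v a₁ ω₂ < v a' ω₂)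
    -- every other signal has a unique strict best response under μ̃
    (huniq : ∀ s, s ≠ s₀ → ∃ as : 𝒜, ∀ a, a ≠ as →
      ∑ ω, μt ω * π ω s * v a ω < ∑ ω, μt ω * π ω s * v as ω) :
    (∃ ε₀ > (0:ℝ), ∀ ε : ℝ, 0 < ε → ε < ε₀ →
      Uπ (fun ω => μt ω + (if ω = ω₁ then ε else 0) - (if ω = ω₂ then ε else 0)) -
        Uπ (fun ω => μt ω - (if ω = ω₁ then ε else 0) + (if ω = ω₂ then ε else 0)) =
      ∑ ω, μ₀ ω * π ω s₀ * (u a₁ ω - u a' ω)) ∧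
    ((∑ ω, μ₀ ω * π ω s₀ * (u a₁ ω - u a' ω)) ≠ 0 → ¬ ContinuousAt Uπ μt) := by
  set d₁ : Ω → ℝ := Pi.single ω₁ 1 - Pi.single ω₂ 1
  set d₂ : Ω → ℝ := Pi.single ω₂ 1 - Pi.single ω₁ 1
  have hgain₁ := mul_lt_mul_of_pos_left hv1 (hs₀ ω₁)
  have hgain₂ := mul_lt_mul_of_pos_left hv2 (hs₀ ω₂)
  have hdir₁ : receiverPayoff π v d₁ s₀ a' < receiverPayoff π v d₁ s₀ a₁ := by
    simp only [d₁, receiverPayoff_single_sub_single]; linarith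
  have hdir₂ : receiverPayoff π v d₂ s₀ a₁ < receiverPayoff π v d₂ s₀ a' := by
    simp only [d₂, receiverPayoff_single_sub_single]; linarith
  have hpert (d : Ω → ℝ) : Tendsto (fun ε : ℝ => μt + ε • d) (𝓝[>] 0) (𝓝 μt) :=
    (tendsto_add_smul_nhds_zero μt d).mono_left nhdsWithin_le_nhds
  choose b hb using huniq
  have hoff : ∀ᶠ ε in 𝓝[>] (0 : ℝ), ∀ s, s ≠ s₀ →
      astar (μt + ε • d₁) s = astar (μt + ε • d₂) s := by
    refine eventually_all.2 fun s => ?_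
    by_cases hs : s = s₀
    · exact .of_forall fun _ hne => absurd hs hne
    · have hstable := eventually_bestResponse_eq_of_strictMax π astar hbr (hb s hs)
      filter_upwards [(hpert d₁).eventually hstable, (hpert d₂).eventually hstable] with ε h₁ h₂ _
      rw [h₁, h₂]
  have hjump : ∀ᶠ ε in 𝓝[>] (0 : ℝ),
      Uπ (μt + ε • d₁) - Uπ (μt + ε • d₂) = ∑ ω, μ₀ ω * π ω s₀ * (u a₁ ω - u a' ω) := by
    filter_upwards [hoff,
      eventually_bestResponse_eq_of_tie π astar hbr hindiff.symm hstrict hdir₁,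
      eventually_bestResponse_eq_of_tie π astar hbr hindiff
        (fun a h₁ h₂ => (hstrict a h₂ h₁).trans_eq hindiff) hdir₂] with ε hoffε h₁ h₂
    rw [hU, hU, ← h₁, ← h₂]
    exact senderUtility_sub_of_forall_ne_eq μ₀ π u s₀ hoffε
  refine ⟨?_, fun hc => not_continuousAt_of_eventually_sub_eq (hpert d₁) (hpert d₂) hc hjump⟩
  obtain ⟨ε₀, hε₀, hsub⟩ := mem_nhdsGT_iff_exists_Ioo_subset.1 hjump
  refine ⟨ε₀, hε₀, fun ε h₀ h₁ => ?_⟩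
  simp_rw [sub_add_eq_add_sub, add_ite_sub_ite_eq_add_smul]
  exact hsub ⟨h₀, h₁⟩

/-- Discontinuity of the fixed-scheme sender utility at an indifference
prior: if the prior `μ̃` is supported exactly on `{ω₁, ω₂}`, the receiver is exactly
indifferent between `a₁` and `a'` (both strictly better than all other actions) upon signal
`s₀`, the two actions disagree across the two states, and all other signals have unique
strict best responses, then perturbing the prior by `±ε` along `ω₁, ω₂` changes the sender's
utility by the constant `Σ_ω μ₀(ω)π(s₀|ω)(u(a₁,ω) − u(a',ω))`; if this constant is nonzero,
`U_π` is discontinuous at `μ̃`. -/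
theorem fixed_scheme_sender_utility_discontinuous
    {Ω 𝒜 𝒮 : Type*} [Fintype Ω] [Fintype 𝒜] [Fintype 𝒮]
    [Nonempty Ω] [Nonempty 𝒜] [Nonempty 𝒮] [DecidableEq Ω]
    (u v : 𝒜 → Ω → ℝ)
    (hu : ∀ a ω, u a ω ∈ Set.Icc (0:ℝ) 1)
    (hv : ∀ a ω, v a ω ∈ Set.Icc (0:ℝ) 1)
    (μ₀ : Ω → ℝ) (hμ₀pos : ∀ ω, 0 < μ₀ ω) (hμ₀sum : ∑ ω, μ₀ ω = 1)
    (π : Ω → 𝒮 → ℝ) (hπ : ∀ ω s, 0 ≤ π ω s) (hπsum : ∀ ω, ∑ s, π ω s = 1)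
    -- receiver best response (ties broken in favor of the sender)
    (astar : (Ω → ℝ) → 𝒮 → 𝒜)
    (hbr : ∀ (μ : Ω → ℝ) (s : 𝒮) (a : 𝒜),
      ∑ ω, μ ω * π ω s * v a ω ≤ ∑ ω, μ ω * π ω s * v (astar μ s) ω)
    (htie : ∀ (μ : Ω → ℝ) (s : 𝒮) (a : 𝒜),
      ∑ ω, μ ω * π ω s * v a ω = ∑ ω, μ ω * π ω s * v (astar μ s) ω →
      ∑ ω, μ₀ ω * π ω s * u a ω ≤ ∑ ω, μ₀ ω * π ω s * u (astar μ s) ω)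
    -- the sender's utility as a function of the receiver's prior
    (Uπ : (Ω → ℝ) → ℝ)
    (hU : ∀ μ, Uπ μ = ∑ ω, μ₀ ω * ∑ s, π ω s * u (astar μ s) ω)
    -- a signal sent with positive probability in every state
    (s₀ : 𝒮) (hs₀ : ∀ ω, 0 < π ω s₀)
    -- the indifference prior, supported exactly on two distinct states
    (μt : Ω → ℝ) (hμt : ∀ ω, 0 ≤ μt ω) (hμtsum : ∑ ω, μt ω = 1)
    (ω₁ ω₂ : Ω) (hω : ω₁ ≠ ω₂)
    (hsupp1 : 0 < μt ω₁) (hsupp2 : 0 < μt ω₂)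
    (hsupp : ∀ ω, ω ≠ ω₁ → ω ≠ ω₂ → μt ω = 0)
    -- two actions in exact indifference, strictly above all others, at signal s₀
    (a₁ a' : 𝒜) (ha : a₁ ≠ a')
    (hindiff : ∑ ω, μt ω * π ω s₀ * v a₁ ω = ∑ ω, μt ω * π ω s₀ * v a' ω)
    (hstrict : ∀ a, a ≠ a₁ → a ≠ a' →
      ∑ ω, μt ω * π ω s₀ * v a ω < ∑ ω, μt ω * π ω s₀ * v a₁ ω)
    -- the two actions disagree across the two states
    (hv1 : v a' ω₁ < v a₁ ω₁) (hv2 : v a₁ ω₂ < v a' ω₂)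
    -- every other signal has a unique strict best response under μ̃
    (huniq : ∀ s, s ≠ s₀ → ∃ as : 𝒜, ∀ a, a ≠ as →
      ∑ ω, μt ω * π ω s * v a ω < ∑ ω, μt ω * π ω s * v as ω) :
    (∃ ε₀ > (0:ℝ), ∀ ε : ℝ, 0 < ε → ε < ε₀ →
      Uπ (fun ω => μt ω + (if ω = ω₁ then ε else 0) - (if ω = ω₂ then ε else 0)) -
        Uπ (fun ω => μt ω - (if ω = ω₁ then ε else 0) + (if ω = ω₂ then ε else 0)) =
      ∑ ω, μ₀ ω * π ω s₀ * (u a₁ ω - u a' ω)) ∧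
    ((∑ ω, μ₀ ω * π ω s₀ * (u a₁ ω - u a' ω)) ≠ 0 → ¬ ContinuousAt Uπ μt) :=
  fixed_scheme_sender_utility_discontinuous_general u v μ₀ π astar hbr Uπ hU s₀ hs₀ μt ω₁ ω₂ a₁ a'
    hindiff hstrict hv1 hv2 huniq
end
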